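/- arXiv:2603.03268 — 6 statements merged into one kernel-verified Lean document; each statement's English description precedes it below -/
import Mathlib

section
/- Let μ be a Borel measure on [0,∞), T > 0, and y : [0,∞) → ℝ Borel measurable with ‖y‖_H² = ∫(1+θ)^{-1/2}|y(θ)|²dμ(θ) < ∞. Then ∫₀ᵀ ( ∫ (1+θ)^{1/2} e^{-2θt} |y(θ)|² dμ(θ) ) dt ≤ (T + 1/2) ‖y‖_H². In other words, the map y ↦ (S(t)y)_{t∈(0,T]} is a bounded linear operator from H into L²(0,T;V). -/
open MeasureTheory ENNReal Set

lemma exp_deriv_aux (θ : ℝ) (hθ : 0 < θ) (t : ℝ) :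
    HasDerivAt (fun t => -(Real.exp (-(2 * θ * t)) / (2 * θ))) (Real.exp (-(2 * θ * t))) t := by
  have h1 : HasDerivAt (fun t : ℝ => -(2 * θ * t)) (-(2 * θ)) t := by
    simpa using ((hasDerivAt_id t).const_mul (-(2 * θ)))
  have h2 := (Real.hasDerivAt_exp (-(2 * θ * t))).comp t h1
  have h3 := (h2.div_const (2 * θ)).neg
  have h2θ : (2 * θ) ≠ 0 := by positivity
  refine h3.congr_deriv ?_
  rw [mul_neg, neg_div, neg_neg, mul_div_assoc, div_self h2θ, mul_one]

lemma exp_integral_bound (T θ : ℝ) (hT : 0 < T) (hθ : 0 ≤ θ) :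
    ∫ t in Set.Ioc (0 : ℝ) T, Real.exp (-(2 * θ * t)) ≤ (T + 1/2) / (1 + θ) := by
  rw [← intervalIntegral.integral_of_le hT.le]
  rcases eq_or_lt_of_le hθ with h0 | h0
  · simp only [← h0]
    norm_num
  · have h2θ : (2 * θ) ≠ 0 := by positivity
    have hint : ∫ t in (0:ℝ)..T, Real.exp (-(2 * θ * t)) =
        (1 - Real.exp (-(2 * θ * T))) / (2 * θ) := by
      rw [intervalIntegral.integral_eq_sub_of_hasDerivAt (fun t _ => exp_deriv_aux θ h0 t)]
      · rw [mul_zero, neg_zero, Real.exp_zero]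
        field_simp
        ring
      · apply Continuous.intervalIntegrable
        continuity
    rw [hint]
    have he : Real.exp (-(2 * θ * T)) ≥ 1 - 2 * θ * T := by
      have := Real.add_one_le_exp (-(2 * θ * T)); linarith
    have hepos : 0 < Real.exp (-(2 * θ * T)) := Real.exp_pos _
    rw [div_le_div_iff₀ (by positivity) (by positivity)]
    nlinarith

/-- `y ↦ (S(t)y)_{t ∈ (0,T]}` is bounded from `H` into `L²(0,T;V)`:
`∫₀ᵀ ‖S(t)y‖_V² dt ≤ (T + 1/2)‖y‖_H²`. -/
theorem stmt4 (μ : Measure ℝ) (hsupp : μ (Set.Iio 0) = 0)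
    (T : ℝ) (hT : 0 < T) (y : ℝ → ℝ) (hy : Measurable y)
    (hH : ∫⁻ θ, ENNReal.ofReal ((1 + θ) ^ (-(1/2) : ℝ)) * ENNReal.ofReal ((y θ) ^ 2) ∂μ < ⊤) :
    ∫⁻ t in Set.Ioc (0 : ℝ) T,
        (∫⁻ θ, ENNReal.ofReal ((1 + θ) ^ ((1/2) : ℝ)) *
          ENNReal.ofReal (Real.exp (-(2 * θ * t)) * (y θ) ^ 2) ∂μ) ≤
      ENNReal.ofReal (T + 1/2) *
        ∫⁻ θ, ENNReal.ofReal ((1 + θ) ^ (-(1/2) : ℝ)) * ENNReal.ofReal ((y θ) ^ 2) ∂μ := by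
  set g : ℝ → ℝ≥0∞ := fun θ =>
    ENNReal.ofReal ((1 + θ) ^ (-(1/2) : ℝ)) * ENNReal.ofReal ((y θ) ^ 2) with hg
  have hgmeas : Measurable g :=
    ((measurable_const.add measurable_id).pow measurable_const).ennreal_ofReal.mul
      ((hy.pow measurable_const).ennreal_ofReal)
  set ν : Measure ℝ := μ.withDensity g with hν
  have hνuniv : ν Set.univ = ∫⁻ θ, g θ ∂μ := by
    rw [hν, withDensity_apply _ MeasurableSet.univ, Measure.restrict_univ]
  have : IsFiniteMeasure ν := ⟨by rw [hνuniv]; exact hH⟩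
  set h : ℝ → ℝ → ℝ≥0∞ := fun t θ =>
    ENNReal.ofReal (1 + θ) * ENNReal.ofReal (Real.exp (-(2 * θ * t))) with hh
  have hhmeas : Measurable (Function.uncurry h) := by
    apply Measurable.mul (f := fun p : ℝ × ℝ => ENNReal.ofReal (1 + p.2))
      (g := fun p : ℝ × ℝ => ENNReal.ofReal (Real.exp (-(2 * p.2 * p.1))))
    · exact (measurable_const.add measurable_snd).ennreal_ofReal
    · exact ((((measurable_snd.const_mul 2).mul measurable_fst).neg).exp).ennreal_ofReal
  have haeμ : ∀ᵐ θ ∂μ, 0 ≤ θ := by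
    rw [ae_iff]; simpa [Set.Iio] using hsupp
  have haeν : ∀ᵐ θ ∂ν, 0 ≤ θ := by
    rw [ae_iff]
    have hset : {θ : ℝ | ¬ 0 ≤ θ} = Set.Iio 0 := by ext x; simp [not_le]
    rw [hset, hν, withDensity_apply _ measurableSet_Iio,
      Measure.restrict_eq_zero.mpr hsupp, lintegral_zero_measure]
  -- step 1: rewrite inner integral via withDensity
  have step1 : ∀ t : ℝ, (∫⁻ θ, ENNReal.ofReal ((1 + θ) ^ ((1/2) : ℝ)) *
      ENNReal.ofReal (Real.exp (-(2 * θ * t)) * (y θ) ^ 2) ∂μ) = ∫⁻ θ, h t θ ∂ν := by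
    intro t
    have hht : Measurable (h t) :=
      (measurable_const.add measurable_id).ennreal_ofReal.mul
        ((((measurable_id.const_mul (2:ℝ)).mul_const t).neg).exp).ennreal_ofReal
    rw [hν, lintegral_withDensity_eq_lintegral_mul _ hgmeas hht]
    apply lintegral_congr_ae
    filter_upwards [haeμ] with θ hθ
    have h1θ : (0:ℝ) < 1 + θ := by linarith
    have hpow : (1 + θ) * (1 + θ) ^ (-(1/2) : ℝ) = (1 + θ) ^ ((1/2) : ℝ) := by
      nth_rewrite 1 [← Real.rpow_one (1 + θ)]
      rw [← Real.rpow_add h1θ]; norm_num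
    have hre : (1 + θ) ^ ((1/2) : ℝ) * (Real.exp (-(2 * θ * t)) * (y θ) ^ 2) =
        ((1 + θ) ^ (-(1/2) : ℝ) * (y θ) ^ 2) * ((1 + θ) * Real.exp (-(2 * θ * t))) := by
      rw [← hpow]; ring
    have hr : (0:ℝ) ≤ (1 + θ) ^ ((1/2) : ℝ) := by positivity
    have hs : (0:ℝ) ≤ (1 + θ) ^ (-(1/2) : ℝ) := by positivity
    simp only [Pi.mul_apply, hg, hh]
    rw [← ENNReal.ofReal_mul hr, ← ENNReal.ofReal_mul hs, ← ENNReal.ofReal_mul h1θ.le,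
      ← ENNReal.ofReal_mul (by positivity)]
    exact congrArg ENNReal.ofReal hre
  simp_rw [step1]
  -- step 2: swap
  rw [lintegral_lintegral_swap hhmeas.aemeasurable]
  -- step 3: bound inner t-integral
  have step3 : ∀ᵐ θ ∂ν, (∫⁻ t in Set.Ioc (0:ℝ) T, h t θ) ≤ ENNReal.ofReal (T + 1/2) := by
    filter_upwards [haeν] with θ hθ
    have h1θ : (0:ℝ) < 1 + θ := by linarith
    simp only [hh]
    have hm : Measurable fun t : ℝ => ENNReal.ofReal (Real.exp (-(2 * θ * t))) := by
      exact (Real.measurable_exp.comp ((measurable_id.const_mul (2 * θ)).neg)).ennreal_ofReal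
    rw [lintegral_const_mul _ hm]
    have hexp : ∫⁻ t in Set.Ioc (0 : ℝ) T, ENNReal.ofReal (Real.exp (-(2 * θ * t))) ≤
        ENNReal.ofReal ((T + 1/2) / (1 + θ)) := by
      rw [← ofReal_integral_eq_lintegral_ofReal]
      · exact ENNReal.ofReal_le_ofReal (exp_integral_bound T θ hT hθ)
      · apply Continuous.integrableOn_Ioc; continuity
      · exact Filter.Eventually.of_forall fun t => (Real.exp_pos _).le
    calc ENNReal.ofReal (1 + θ) * ∫⁻ t in Set.Ioc (0:ℝ) T, ENNReal.ofReal (Real.exp (-(2 * θ * t)))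
        ≤ ENNReal.ofReal (1 + θ) * ENNReal.ofReal ((T + 1/2) / (1 + θ)) :=
          mul_le_mul_right hexp _
      _ = ENNReal.ofReal (T + 1/2) := by
          rw [← ENNReal.ofReal_mul h1θ.le]
          congr 1
          field_simp
  refine le_trans (lintegral_mono_ae step3) ?_
  rw [lintegral_const, hνuniv]
end

section
/- Let (E, ‖·‖) be a real normed space. Define d : E × E → [0,∞) by d(x,y) = sqrt( (‖x−y‖ ∧ 1) · (1 + ‖x‖² + ‖y‖²) ). Then there exists a constant C > 0 (independent of the space) such that for all x, y, z ∈ E: d(x,z) ≤ C ( d(x,y) + d(y,z) ). (Quasi-triangle inequality for the weighted distance-like function.) -/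
set_option maxHeartbeats 800000

lemma key_real (p q r s t u : ℝ) (hp : 0 ≤ p) (hq : 0 ≤ q) (hr : 0 ≤ r)
    (hs : 0 ≤ s) (ht : 0 ≤ t) (hu : 0 ≤ u)
    (hu1 : u ≤ s + t) (h2 : r ≤ t + q) (h3 : p ≤ s + q) :
    min u 1 * (1 + p ^ 2 + r ^ 2) ≤
      6 * (min s 1 * (1 + p ^ 2 + q ^ 2)) + 6 * (min t 1 * (1 + q ^ 2 + r ^ 2)) := by
  set a := min s 1 with ha
  set b := min t 1 with hb
  set c := min u 1 with hc
  have ha0 : 0 ≤ a := le_min hs zero_le_one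
  have hb0 : 0 ≤ b := le_min ht zero_le_one
  have ha1 : a ≤ 1 := min_le_right _ _
  have hb1 : b ≤ 1 := min_le_right _ _
  have hcu : c ≤ u := min_le_left _ _
  have hc1 : c ≤ 1 := min_le_right _ _
  have hcab : c ≤ a + b := by
    rcases le_total s 1 with h | h
    · rcases le_total t 1 with h' | h'
      · rw [ha, hb, min_eq_left h, min_eq_left h']; linarith
      · rw [hb, min_eq_right h']; linarith
    · rw [ha, min_eq_right h]; linarith
  have hW1 : (0:ℝ) ≤ 1 + p ^ 2 + q ^ 2 := by positivity
  have hW2 : (0:ℝ) ≤ 1 + q ^ 2 + r ^ 2 := by positivity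
  -- r^2 ≤ 2 b W2 + 2 q^2
  have hr2 : r ^ 2 ≤ 2 * (b * (1 + q ^ 2 + r ^ 2)) + 2 * q ^ 2 := by
    rcases le_total t 1 with h | h
    · have : b = t := min_eq_left h
      rw [this]; nlinarith [mul_nonneg ht (sq_nonneg r), mul_nonneg ht (sq_nonneg q), sq_nonneg (t - q)]
    · have : b = 1 := min_eq_right h
      rw [this]; nlinarith
  have hp2 : p ^ 2 ≤ 2 * (a * (1 + p ^ 2 + q ^ 2)) + 2 * q ^ 2 := by
    rcases le_total s 1 with h | h
    · have : a = s := min_eq_left h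
      rw [this]; nlinarith [mul_nonneg hs (sq_nonneg p), mul_nonneg hs (sq_nonneg q), sq_nonneg (s - q)]
    · have : a = 1 := min_eq_right h
      rw [this]; nlinarith
  have h1 : a * r ^ 2 ≤ 2 * (b * (1 + q ^ 2 + r ^ 2)) + 2 * (a * q ^ 2) := by
    have := mul_le_mul_of_nonneg_left hr2 ha0
    have hab : a * (b * (1 + q ^ 2 + r ^ 2)) ≤ b * (1 + q ^ 2 + r ^ 2) :=
      mul_le_of_le_one_left (mul_nonneg hb0 hW2) ha1
    nlinarith
  have h4 : b * p ^ 2 ≤ 2 * (a * (1 + p ^ 2 + q ^ 2)) + 2 * (b * q ^ 2) := by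
    have := mul_le_mul_of_nonneg_left hp2 hb0
    have hab : b * (a * (1 + p ^ 2 + q ^ 2)) ≤ a * (1 + p ^ 2 + q ^ 2) :=
      mul_le_of_le_one_left (mul_nonneg ha0 hW1) hb1
    nlinarith
  have hcW : c * (1 + p ^ 2 + r ^ 2) ≤ (a + b) * (1 + p ^ 2 + r ^ 2) :=
    mul_le_mul_of_nonneg_right hcab (by positivity)
  nlinarith [mul_nonneg ha0 (sq_nonneg q), mul_nonneg hb0 (sq_nonneg q),
    mul_nonneg ha0 (sq_nonneg p), mul_nonneg hb0 (sq_nonneg r),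
    mul_nonneg ha0 hW1, mul_nonneg hb0 hW2]

lemma sqrt_add_le (A B : ℝ) : Real.sqrt (A + B) ≤ Real.sqrt A + Real.sqrt B := by
  rcases le_total A 0 with hA | hA
  · rcases le_total B 0 with hB | hB
    · rw [Real.sqrt_eq_zero_of_nonpos (by linarith)]
      positivity
    · calc Real.sqrt (A + B) ≤ Real.sqrt B := Real.sqrt_le_sqrt (by linarith)
        _ ≤ Real.sqrt A + Real.sqrt B := by nlinarith [Real.sqrt_nonneg A]
  · rcases le_total B 0 with hB | hB
    · calc Real.sqrt (A + B) ≤ Real.sqrt A := Real.sqrt_le_sqrt (by linarith)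
        _ ≤ Real.sqrt A + Real.sqrt B := by nlinarith [Real.sqrt_nonneg B]
    · rw [show Real.sqrt A + Real.sqrt B = Real.sqrt ((Real.sqrt A + Real.sqrt B) ^ 2) by
        rw [Real.sqrt_sq (by positivity)]]
      apply Real.sqrt_le_sqrt
      nlinarith [Real.sq_sqrt hA, Real.sq_sqrt hB,
        mul_nonneg (Real.sqrt_nonneg A) (Real.sqrt_nonneg B)]

lemma sqrt_nine (A : ℝ) : Real.sqrt (9 * A) = 3 * Real.sqrt A := by
  rw [show (9:ℝ) = 3 ^ 2 by norm_num, Real.sqrt_mul (by positivity),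
    Real.sqrt_sq (by norm_num)]

/-- Quasi-triangle inequality for the weighted distance-like function
`d(x,y) = √((‖x-y‖∧1)(1+‖x‖²+‖y‖²))`, with a constant independent of the space. -/
theorem stmt8 :
    ∃ C : ℝ, 0 < C ∧ ∀ (E : Type) [NormedAddCommGroup E] [NormedSpace ℝ E] (x y z : E),
      Real.sqrt ((min ‖x - z‖ 1) * (1 + ‖x‖ ^ 2 + ‖z‖ ^ 2)) ≤
        C * (Real.sqrt ((min ‖x - y‖ 1) * (1 + ‖x‖ ^ 2 + ‖y‖ ^ 2)) +
          Real.sqrt ((min ‖y - z‖ 1) * (1 + ‖y‖ ^ 2 + ‖z‖ ^ 2))) := by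
  refine ⟨3, by norm_num, fun E _ _ x y z => ?_⟩
  have hA : (0:ℝ) ≤ (min ‖x - y‖ 1) * (1 + ‖x‖ ^ 2 + ‖y‖ ^ 2) := by positivity
  have hB : (0:ℝ) ≤ (min ‖y - z‖ 1) * (1 + ‖y‖ ^ 2 + ‖z‖ ^ 2) := by positivity
  have hkey : (min ‖x - z‖ 1) * (1 + ‖x‖ ^ 2 + ‖z‖ ^ 2) ≤
      9 * ((min ‖x - y‖ 1) * (1 + ‖x‖ ^ 2 + ‖y‖ ^ 2)) +
      9 * ((min ‖y - z‖ 1) * (1 + ‖y‖ ^ 2 + ‖z‖ ^ 2)) := by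
    have h := key_real ‖x‖ ‖y‖ ‖z‖ ‖x - y‖ ‖y - z‖ ‖x - z‖ (norm_nonneg _) (norm_nonneg _)
      (norm_nonneg _) (norm_nonneg _) (norm_nonneg _) (norm_nonneg _)
      (by simpa using norm_sub_le_norm_sub_add_norm_sub x y z)
      (by have := norm_le_norm_add_norm_sub' z y; rw [norm_sub_rev]; linarith)
      (by have := norm_le_norm_add_norm_sub' x y; linarith)
    nlinarith
  calc Real.sqrt ((min ‖x - z‖ 1) * (1 + ‖x‖ ^ 2 + ‖z‖ ^ 2))
      ≤ Real.sqrt (9 * ((min ‖x - y‖ 1) * (1 + ‖x‖ ^ 2 + ‖y‖ ^ 2)) +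
          9 * ((min ‖y - z‖ 1) * (1 + ‖y‖ ^ 2 + ‖z‖ ^ 2))) := Real.sqrt_le_sqrt hkey
    _ ≤ Real.sqrt (9 * ((min ‖x - y‖ 1) * (1 + ‖x‖ ^ 2 + ‖y‖ ^ 2))) +
          Real.sqrt (9 * ((min ‖y - z‖ 1) * (1 + ‖y‖ ^ 2 + ‖z‖ ^ 2))) := sqrt_add_le _ _
    _ = 3 * (Real.sqrt ((min ‖x - y‖ 1) * (1 + ‖x‖ ^ 2 + ‖y‖ ^ 2)) +
          Real.sqrt ((min ‖y - z‖ 1) * (1 + ‖y‖ ^ 2 + ‖z‖ ^ 2))) := by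
        rw [sqrt_nine, sqrt_nine]; ring
end

section
/- Let μ be a Borel measure on [0,∞) with ∫(1+θ)^{-1/2}dμ(θ) < ∞, and let H and V be the weighted L²(μ)-spaces of real-valued functions with norms ‖y‖_H² = ∫(1+θ)^{-1/2}|y|²dμ and ‖y‖_V² = ∫(1+θ)^{1/2}|y|²dμ. Then the embedding V ↪ H is compact if and only if supp μ ∩ [0,m] is a finite set for every m ∈ (0,∞). -/
open MeasureTheory ENNReal Set Filter

/-- The topological support of a Borel measure on `ℝ`: points all of whose
neighborhoods have positive measure. -/
def measSupport (μ : MeasureTheory.Measure ℝ) : Set ℝ :=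
  {x : ℝ | ∀ U ∈ nhds x, μ U ≠ 0}


lemma rpow_half_eq {θ : ℝ} (h : 0 ≤ θ) :
    (1+θ) ^ ((1/2):ℝ) = (1+θ)^(-(1/2):ℝ) * (1+θ) := by
  have h1 : (0:ℝ) < 1 + θ := by linarith
  nth_rewrite 3 [show (1+θ) = (1+θ)^(1:ℝ) from (Real.rpow_one _).symm]
  rw [← Real.rpow_add h1]
  norm_num

lemma wp_le_head {θ M : ℝ} (h0 : 0 ≤ θ) (hM : θ ≤ M) :
    ENNReal.ofReal ((1+θ) ^ ((1/2):ℝ)) ≤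
      ENNReal.ofReal (1+M) * ENNReal.ofReal ((1+θ)^(-(1/2):ℝ)) := by
  rw [← ENNReal.ofReal_mul (by linarith)]
  apply ENNReal.ofReal_le_ofReal
  rw [rpow_half_eq h0, mul_comm (1+M)]
  have : (0:ℝ) ≤ (1+θ)^(-(1/2):ℝ) := Real.rpow_nonneg (by linarith) _
  nlinarith

lemma wm_le_tail {θ M : ℝ} (h0 : 0 ≤ M) (hM : M ≤ θ) :
    ENNReal.ofReal (1+M) * ENNReal.ofReal ((1+θ)^(-(1/2):ℝ)) ≤
      ENNReal.ofReal ((1+θ) ^ ((1/2):ℝ)) := by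
  have h0' : (0:ℝ) ≤ θ := le_trans h0 hM
  rw [← ENNReal.ofReal_mul (by linarith)]
  apply ENNReal.ofReal_le_ofReal
  rw [rpow_half_eq h0']
  have : (0:ℝ) ≤ (1+θ)^(-(1/2):ℝ) := Real.rpow_nonneg (by linarith) _
  nlinarith

lemma wm_const_le {θ m : ℝ} (h0 : 0 ≤ θ) (hm : θ ≤ m) :
    ENNReal.ofReal ((1+m) ^ (-(1/2):ℝ)) ≤ ENNReal.ofReal ((1+θ)^(-(1/2):ℝ)) := by
  apply ENNReal.ofReal_le_ofReal
  rw [Real.rpow_neg (by linarith), Real.rpow_neg (by linarith)]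
  apply inv_anti₀
  · positivity
  · exact Real.rpow_le_rpow (by linarith) (by linarith) (by norm_num)

lemma one_le_wp {θ : ℝ} (h0 : 0 ≤ θ) : 1 ≤ ENNReal.ofReal ((1+θ) ^ ((1/2):ℝ)) := by
  rw [ENNReal.one_le_ofReal]
  exact Real.one_le_rpow (by linarith) (by norm_num)

lemma measurable_wm : Measurable (fun θ : ℝ => ENNReal.ofReal ((1+θ)^(-(1/2):ℝ))) := by
  apply ENNReal.measurable_ofReal.comp; fun_prop

lemma measurable_wp : Measurable (fun θ : ℝ => ENNReal.ofReal ((1+θ)^((1/2):ℝ))) := by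
  apply ENNReal.measurable_ofReal.comp; fun_prop

lemma exists_strictMono_or_anti {S : Set ℝ} (hS : S.Infinite) :
    ∃ z : ℕ → ℝ, (∀ n, z n ∈ S) ∧ (StrictMono z ∨ StrictAnti z) := by
  by_cases h : S.IsWF
  · set u := hS.natEmbedding with hu
    have hmem : ∀ n, (u n : ℝ) ∈ S := fun n => (u n).2
    obtain ⟨g, hg⟩ := (h.isPWO).exists_monotone_subseq hmem
    refine ⟨fun n => (u (g n) : ℝ), fun n => hmem _, Or.inl ?_⟩
    have hinj : Function.Injective fun n => (u (g n) : ℝ) := by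
      intro a b hab
      exact g.injective (u.injective (Subtype.ext hab))
    exact hg.strictMono_of_injective hinj
  · rw [Set.isWF_iff_no_descending_seq] at h
    push_neg at h
    obtain ⟨f, hf, hmem⟩ := h
    exact ⟨f, fun n => hmem n, Or.inr hf⟩

lemma measSupport_subset_Ici {μ : Measure ℝ} (hsupp : μ (Set.Iio 0) = 0) :
    measSupport μ ⊆ Ici 0 := by
  intro x hx
  by_contra h
  simp only [mem_Ici, not_le] at h
  exact hx (Iio 0) (Iio_mem_nhds (by simpa using h)) hsupp

lemma measSupport_compl_null (μ : Measure ℝ) : μ (measSupport μ)ᶜ = 0 := by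
  have h : ∀ x : ((measSupport μ)ᶜ : Set ℝ), ∃ O : Set ℝ, IsOpen O ∧ (x:ℝ) ∈ O ∧ μ O = 0 := by
    rintro ⟨x, hx⟩
    simp only [measSupport, mem_compl_iff, mem_setOf_eq] at hx
    push_neg at hx
    obtain ⟨U, hU, hU0⟩ := hx
    obtain ⟨O, hO_sub, hO_open, hxO⟩ := mem_nhds_iff.mp hU
    exact ⟨O, hO_open, hxO, measure_mono_null hO_sub hU0⟩
  choose O hOopen hOmem hOnull using h
  have hcover : (measSupport μ)ᶜ ⊆ ⋃ i, O i := fun x hx =>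
    mem_iUnion.mpr ⟨⟨x, hx⟩, hOmem ⟨x, hx⟩⟩
  obtain ⟨T, hTct, hTeq⟩ := TopologicalSpace.isOpen_iUnion_countable O hOopen
  have : μ (⋃ i, O i) = 0 := by
    rw [← hTeq]
    exact (measure_biUnion_null_iff hTct).mpr fun i _ => hOnull i
  exact measure_mono_null hcover this

lemma myMeasure_Icc_lt_top {μ : Measure ℝ}
    (hμ : ∫⁻ θ, ENNReal.ofReal ((1 + θ) ^ (-(1/2) : ℝ)) ∂μ < ⊤) (m : ℝ) (hm : 0 ≤ m) :
    μ (Icc 0 m) < ⊤ := by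
  set c : ℝ≥0∞ := ENNReal.ofReal ((1+m) ^ (-(1/2):ℝ)) with hc
  have hcpos : 0 < c := by
    rw [hc]
    apply ENNReal.ofReal_pos.mpr
    positivity
  have key : c * μ (Icc 0 m) ≤ ∫⁻ θ, ENNReal.ofReal ((1 + θ) ^ (-(1/2) : ℝ)) ∂μ := by
    calc c * μ (Icc 0 m) = ∫⁻ _ in Icc 0 m, c ∂μ := (setLIntegral_const _ _).symm
      _ ≤ ∫⁻ θ in Icc 0 m, ENNReal.ofReal ((1 + θ) ^ (-(1/2) : ℝ)) ∂μ := by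
          apply setLIntegral_mono (by apply ENNReal.measurable_ofReal.comp; fun_prop)
          intro θ hθ
          apply ENNReal.ofReal_le_ofReal
          rw [Real.rpow_neg (by linarith [hθ.2]), Real.rpow_neg (by linarith [hθ.1])]
          apply inv_anti₀ (Real.rpow_pos_of_pos (by linarith [hθ.1]) _)
          exact Real.rpow_le_rpow (by linarith [hθ.1]) (by linarith [hθ.2]) (by norm_num)
      _ ≤ _ := setLIntegral_le_lintegral _ _
  by_contra h
  push_neg at h
  rw [top_le_iff.mp h, ENNReal.mul_top hcpos.ne'] at key
  exact absurd (top_le_iff.mp key) (by simpa using hμ.ne)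

lemma atom_pos {μ : Measure ℝ} (hsupp : μ (Set.Iio 0) = 0)
    (hfin : ∀ m : ℝ, 0 < m → (measSupport μ ∩ Set.Icc 0 m).Finite)
    {x : ℝ} (hx : x ∈ measSupport μ) : μ {x} ≠ 0 := by
  have hx0 : 0 ≤ x := measSupport_subset_Ici hsupp hx
  set T : Set ℝ := (measSupport μ ∩ Icc 0 (x+1)) \ {x} with hT
  have hTfin : T.Finite := ((hfin (x+1) (by linarith)).diff)
  set U : Set ℝ := Tᶜ ∩ Ioo (x-1) (x+1) with hU
  have hUnhds : U ∈ nhds x := by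
    apply Filter.inter_mem
    · exact (hTfin.isClosed.isOpen_compl).mem_nhds (by simp [hT])
    · exact Ioo_mem_nhds (by linarith) (by linarith)
  have hUdiff : μ (U \ {x}) = 0 := by
    apply measure_mono_null _ (measSupport_compl_null μ)
    rintro u ⟨⟨huT, hu1, hu2⟩, hux⟩
    intro husupp
    apply huT
    refine ⟨⟨husupp, measSupport_subset_Ici hsupp husupp, by linarith⟩, hux⟩
  have : μ U ≤ μ {x} := by
    calc μ U ≤ μ ({x} ∪ (U \ {x})) := measure_mono (by intro u hu; by_cases h : u = x <;> simp [h, hu])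
      _ ≤ μ {x} + μ (U \ {x}) := measure_union_le _ _
      _ = μ {x} := by rw [hUdiff, add_zero]
  intro h0
  exact hx U hUnhds (le_antisymm (h0 ▸ this) zero_le)

lemma exists_disjoint_intervals {S : Set ℝ} {m : ℝ}
    (hinf : (S ∩ Icc 0 m).Infinite) :
    ∃ A : ℕ → Set ℝ, (∀ n, IsOpen (A n)) ∧ (∀ n, (A n ∩ S).Nonempty) ∧
      (∀ n, A n ⊆ Icc 0 m) ∧ ∀ i j, i ≠ j → Disjoint (A i) (A j) := by
  obtain ⟨z, hz, hmono | hanti⟩ := exists_strictMono_or_anti hinf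
  · refine ⟨fun n => Ioo ((z n + z (n+1))/2) ((z (n+1) + z (n+2))/2),
      fun n => isOpen_Ioo, ?_, ?_, ?_⟩
    · intro n
      refine ⟨z (n+1), ⟨?_, ?_⟩, (hz (n+1)).1⟩
      · linarith [hmono (by omega : n < n+1)]
      · linarith [hmono (by omega : n+1 < n+2)]
    · intro n x hx
      have h0 := (hz n).2.1; have h1 := (hz (n+1)).2.1
      have h2 := (hz (n+1)).2.2; have h3 := (hz (n+2)).2.2
      exact ⟨by cases hx with | intro a b => linarith, by cases hx with | intro a b => linarith⟩
    · intro i j hij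
      rw [Set.disjoint_left]
      intro x hxi hxj
      rcases hij.lt_or_gt with h | h
      · have k1 : z (i+1) ≤ z j := hmono.monotone (by omega)
        have k2 : z (i+2) ≤ z (j+1) := hmono.monotone (by omega)
        have := hxi.2; have := hxj.1
        linarith
      · have k1 : z (j+1) ≤ z i := hmono.monotone (by omega)
        have k2 : z (j+2) ≤ z (i+1) := hmono.monotone (by omega)
        have := hxj.2; have := hxi.1
        linarith
  · refine ⟨fun n => Ioo ((z (n+1) + z (n+2))/2) ((z n + z (n+1))/2),
      fun n => isOpen_Ioo, ?_, ?_, ?_⟩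
    · intro n
      refine ⟨z (n+1), ⟨?_, ?_⟩, (hz (n+1)).1⟩
      · linarith [hanti (by omega : n+1 < n+2)]
      · linarith [hanti (by omega : n < n+1)]
    · intro n x hx
      have h0 := (hz (n+2)).2.1; have h1 := (hz (n+1)).2.1
      have h2 := (hz n).2.2; have h3 := (hz (n+1)).2.2
      exact ⟨by cases hx with | intro a b => linarith, by cases hx with | intro a b => linarith⟩
    · intro i j hij
      rw [Set.disjoint_left]
      intro x hxi hxj
      rcases hij.lt_or_gt with h | h
      · have k1 : z j ≤ z (i+1) := hanti.antitone (by omega)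
        have k2 : z (j+1) ≤ z (i+2) := hanti.antitone (by omega)
        have := hxi.1; have := hxj.2
        linarith
      · have k1 : z i ≤ z (j+1) := hanti.antitone (by omega)
        have k2 : z (i+1) ≤ z (j+2) := hanti.antitone (by omega)
        have := hxj.1; have := hxi.2
        linarith

lemma Vdiff_le_four {μ : Measure ℝ} {y1 y2 : ℝ → ℝ} (h1 : Measurable y1) (h2 : Measurable y2)
    (hb1 : ∫⁻ θ, ENNReal.ofReal ((1+θ)^((1/2):ℝ)) * ENNReal.ofReal (y1 θ^2) ∂μ ≤ 1)
    (hb2 : ∫⁻ θ, ENNReal.ofReal ((1+θ)^((1/2):ℝ)) * ENNReal.ofReal (y2 θ^2) ∂μ ≤ 1) :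
    ∫⁻ θ, ENNReal.ofReal ((1+θ)^((1/2):ℝ)) * ENNReal.ofReal ((y1 θ - y2 θ)^2) ∂μ ≤ 4 := by
  have hwp : Measurable (fun θ : ℝ => ENNReal.ofReal ((1+θ)^((1/2):ℝ))) := by
    apply ENNReal.measurable_ofReal.comp; fun_prop
  have hm1 : Measurable (fun θ => ENNReal.ofReal ((1+θ)^((1/2):ℝ)) * ENNReal.ofReal (y1 θ^2)) :=
    hwp.mul (ENNReal.measurable_ofReal.comp (by fun_prop))
  have hm2 : Measurable (fun θ => ENNReal.ofReal ((1+θ)^((1/2):ℝ)) * ENNReal.ofReal (y2 θ^2)) :=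
    hwp.mul (ENNReal.measurable_ofReal.comp (by fun_prop))
  calc ∫⁻ θ, ENNReal.ofReal ((1+θ)^((1/2):ℝ)) * ENNReal.ofReal ((y1 θ - y2 θ)^2) ∂μ
      ≤ ∫⁻ θ, (2 * (ENNReal.ofReal ((1+θ)^((1/2):ℝ)) * ENNReal.ofReal (y1 θ^2)) +
          2 * (ENNReal.ofReal ((1+θ)^((1/2):ℝ)) * ENNReal.ofReal (y2 θ^2))) ∂μ := by
        apply lintegral_mono
        intro θ
        have key : ENNReal.ofReal ((y1 θ - y2 θ)^2) ≤
            2 * ENNReal.ofReal (y1 θ^2) + 2 * ENNReal.ofReal (y2 θ^2) := by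
          rw [show (2:ℝ≥0∞) = ENNReal.ofReal 2 by norm_num, ← ENNReal.ofReal_mul (by norm_num),
            ← ENNReal.ofReal_mul (by norm_num), ← ENNReal.ofReal_add (by positivity) (by positivity)]
          apply ENNReal.ofReal_le_ofReal
          nlinarith [sq_nonneg (y1 θ + y2 θ)]
        calc ENNReal.ofReal ((1+θ)^((1/2):ℝ)) * ENNReal.ofReal ((y1 θ - y2 θ)^2)
            ≤ ENNReal.ofReal ((1+θ)^((1/2):ℝ)) *
              (2 * ENNReal.ofReal (y1 θ^2) + 2 * ENNReal.ofReal (y2 θ^2)) := mul_le_mul_right key _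
          _ = 2 * (ENNReal.ofReal ((1+θ)^((1/2):ℝ)) * ENNReal.ofReal (y1 θ^2)) +
              2 * (ENNReal.ofReal ((1+θ)^((1/2):ℝ)) * ENNReal.ofReal (y2 θ^2)) := by ring
    _ = 2 * (∫⁻ θ, ENNReal.ofReal ((1+θ)^((1/2):ℝ)) * ENNReal.ofReal (y1 θ^2) ∂μ) +
        2 * (∫⁻ θ, ENNReal.ofReal ((1+θ)^((1/2):ℝ)) * ENNReal.ofReal (y2 θ^2) ∂μ) := by
        rw [lintegral_add_left (hm1.const_mul 2), lintegral_const_mul 2 hm1,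
          lintegral_const_mul 2 hm2]
    _ ≤ 2 * 1 + 2 * 1 := add_le_add (mul_le_mul_right hb1 2) (mul_le_mul_right hb2 2)
    _ = 4 := by norm_num

lemma not_compact_of_infinite {μ : Measure ℝ}
    (hμ : ∫⁻ θ, ENNReal.ofReal ((1 + θ) ^ (-(1/2) : ℝ)) ∂μ < ⊤)
    {m : ℝ} (hm : 0 < m) (hinf : (measSupport μ ∩ Set.Icc 0 m).Infinite) :
    ∃ y : ℕ → ℝ → ℝ, (∀ k, Measurable (y k)) ∧
      (∀ k, ∫⁻ θ, ENNReal.ofReal ((1 + θ) ^ ((1/2) : ℝ)) *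
          ENNReal.ofReal ((y k θ) ^ 2) ∂μ ≤ 1) ∧
      ∀ φ : ℕ → ℕ, StrictMono φ → ∀ N : ℕ, ∃ k ≥ N, ∃ l ≥ N,
        ENNReal.ofReal ((1+m)⁻¹) ≤ ∫⁻ θ, ENNReal.ofReal ((1 + θ) ^ (-(1/2) : ℝ)) *
            ENNReal.ofReal ((y (φ k) θ - y (φ l) θ) ^ 2) ∂μ := by
  obtain ⟨A, hAopen, hAne, hAsub, hAdisj⟩ := exists_disjoint_intervals hinf
  have hA0 : ∀ n, ∀ θ ∈ A n, (0:ℝ) ≤ θ := fun n θ hθ => (hAsub n hθ).1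
  have hAm : ∀ n, ∀ θ ∈ A n, θ ≤ m := fun n θ hθ => (hAsub n hθ).2
  have hAmeas : ∀ n, MeasurableSet (A n) := fun n => (hAopen n).measurableSet
  -- μ (A n) positive and finite
  have hμA : ∀ n, μ (A n) ≠ 0 := by
    intro n
    obtain ⟨p, hpA, hpS⟩ := hAne n
    exact hpS (A n) ((hAopen n).mem_nhds hpA)
  have hμAfin : ∀ n, μ (A n) < ⊤ :=
    fun n => lt_of_le_of_lt (measure_mono (hAsub n)) (myMeasure_Icc_lt_top hμ m hm.le)
  set V : ℕ → ℝ≥0∞ := fun n => ∫⁻ θ in A n, ENNReal.ofReal ((1+θ)^((1/2):ℝ)) ∂μ with hV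
  have hVeq : ∀ n, (∫⁻ θ in A n, ENNReal.ofReal ((1+θ)^((1/2):ℝ)) ∂μ) = V n := fun n => rfl
  have hVpos : ∀ n, V n ≠ 0 := by
    intro n
    have : μ (A n) ≤ V n := by
      calc μ (A n) = ∫⁻ _ in A n, 1 ∂μ := by rw [setLIntegral_const, one_mul]
        _ ≤ V n := setLIntegral_mono measurable_wp (fun θ hθ => one_le_wp (hA0 n θ hθ))
    exact fun h => hμA n (le_antisymm (h ▸ this) zero_le)
  have hVfin : ∀ n, V n ≠ ⊤ := by
    intro n
    have : V n ≤ ENNReal.ofReal ((1+m)^((1/2):ℝ)) * μ (A n) := by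
      calc V n ≤ ∫⁻ _ in A n, ENNReal.ofReal ((1+m)^((1/2):ℝ)) ∂μ := by
            apply setLIntegral_mono measurable_const
            intro θ hθ
            apply ENNReal.ofReal_le_ofReal
            exact Real.rpow_le_rpow (by linarith [hA0 n θ hθ]) (by linarith [hAm n θ hθ])
              (by norm_num)
        _ = _ := setLIntegral_const _ _
    exact ne_top_of_le_ne_top (ENNReal.mul_ne_top ofReal_ne_top (hμAfin n).ne) this
  set c : ℕ → ℝ := fun n => Real.sqrt ((V n).toReal⁻¹) with hc
  have hc2 : ∀ n, ENNReal.ofReal ((c n)^2) = (V n)⁻¹ := by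
    intro n
    rw [hc]
    rw [Real.sq_sqrt (by positivity)]
    rw [ENNReal.ofReal_inv_of_pos (ENNReal.toReal_pos (hVpos n) (hVfin n)),
      ENNReal.ofReal_toReal (hVfin n)]
  set y : ℕ → ℝ → ℝ := fun n => (A n).indicator (fun _ => c n) with hy
  have hysq : ∀ n θ, (y n θ)^2 = (A n).indicator (fun _ => (c n)^2) θ := by
    intro n θ
    by_cases h : θ ∈ A n <;> simp [hy, h]
  refine ⟨y, fun n => measurable_const.indicator (hAmeas n), ?_, ?_⟩
  · intro n
    have key : (fun θ => ENNReal.ofReal ((1+θ)^((1/2):ℝ)) * ENNReal.ofReal ((y n θ)^2))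
        = (A n).indicator (fun θ => ENNReal.ofReal ((1+θ)^((1/2):ℝ)) * (V n)⁻¹) := by
      funext θ
      by_cases h : θ ∈ A n
      · simp only [hysq, h, Set.indicator_of_mem, hc2]
      · simp [hysq, h]
    rw [key, lintegral_indicator (hAmeas n)]
    rw [lintegral_mul_const' _ _ (by simp [hVpos n]), hVeq n,
      ENNReal.mul_inv_cancel (hVpos n) (hVfin n)]
  · intro φ hφ N
    refine ⟨N, le_rfl, N+1, by omega, ?_⟩
    have hkl : φ N ≠ φ (N+1) := fun h => by
      have := hφ (by omega : N < N+1); omega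
    have hdisj := hAdisj _ _ hkl
    set k := φ N; set l := φ (N+1)
    have lower : ∀ θ, (A k).indicator
        (fun θ => ENNReal.ofReal ((1+θ)^(-(1/2):ℝ)) * (V k)⁻¹) θ ≤
        ENNReal.ofReal ((1+θ)^(-(1/2):ℝ)) * ENNReal.ofReal ((y k θ - y l θ)^2) := by
      intro θ
      by_cases h : θ ∈ A k
      · have hl : θ ∉ A l := fun h' => (Set.disjoint_left.mp hdisj h) h'
        rw [Set.indicator_of_mem h]
        have : y k θ - y l θ = c k := by simp [hy, h, hl]
        rw [this, hc2]
      · rw [Set.indicator_of_notMem h]; exact zero_le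
    calc ENNReal.ofReal ((1+m)⁻¹)
        = (ENNReal.ofReal (1+m))⁻¹ := ENNReal.ofReal_inv_of_pos (by linarith)
      _ = (ENNReal.ofReal (1+m))⁻¹ * ((V k)⁻¹ * V k) := by
          rw [ENNReal.inv_mul_cancel (hVpos k) (hVfin k), mul_one]
      _ = (ENNReal.ofReal (1+m))⁻¹ * ∫⁻ θ in A k,
            ENNReal.ofReal ((1+θ)^((1/2):ℝ)) * (V k)⁻¹ ∂μ := by
          rw [lintegral_mul_const' _ _ (by simp [hVpos k]), hVeq k, mul_comm ((V k)⁻¹)]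
      _ = ∫⁻ θ in A k, (ENNReal.ofReal (1+m))⁻¹ *
            (ENNReal.ofReal ((1+θ)^((1/2):ℝ)) * (V k)⁻¹) ∂μ := by
          rw [lintegral_const_mul' _ _ (by simp; linarith)]
          
      _ ≤ ∫⁻ θ in A k, ENNReal.ofReal ((1+θ)^(-(1/2):ℝ)) * (V k)⁻¹ ∂μ := by
          apply setLIntegral_mono' (hAmeas k)
          intro θ hθ
          rw [← mul_assoc]
          apply mul_le_mul_left
          have h1 := wp_le_head (hA0 k θ hθ) (hAm k θ hθ)
          calc (ENNReal.ofReal (1+m))⁻¹ * ENNReal.ofReal ((1+θ)^((1/2):ℝ))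
              ≤ (ENNReal.ofReal (1+m))⁻¹ * (ENNReal.ofReal (1+m) *
                ENNReal.ofReal ((1+θ)^(-(1/2):ℝ))) := mul_le_mul_right h1 _
            _ = ENNReal.ofReal ((1+θ)^(-(1/2):ℝ)) := by
                rw [← mul_assoc, ENNReal.inv_mul_cancel (by simp; linarith) ofReal_ne_top,
                  one_mul]
      _ = ∫⁻ θ, (A k).indicator
            (fun θ => ENNReal.ofReal ((1+θ)^(-(1/2):ℝ)) * (V k)⁻¹) θ ∂μ := by
          rw [lintegral_indicator (hAmeas k)]
      _ ≤ _ := lintegral_mono lower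

lemma compact_of_finite {μ : Measure ℝ} (hsupp : μ (Set.Iio 0) = 0)
    (hμ : ∫⁻ θ, ENNReal.ofReal ((1 + θ) ^ (-(1/2) : ℝ)) ∂μ < ⊤)
    (hfin : ∀ m : ℝ, 0 < m → (measSupport μ ∩ Set.Icc 0 m).Finite)
    (y : ℕ → ℝ → ℝ) (hymeas : ∀ k, Measurable (y k))
    (hyV : ∀ k, ∫⁻ θ, ENNReal.ofReal ((1 + θ) ^ ((1/2) : ℝ)) *
        ENNReal.ofReal ((y k θ) ^ 2) ∂μ ≤ 1) :
    ∃ φ : ℕ → ℕ, StrictMono φ ∧ ∀ ε : ℝ, 0 < ε → ∃ N : ℕ, ∀ k ≥ N, ∀ l ≥ N,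
      ∫⁻ θ, ENNReal.ofReal ((1 + θ) ^ (-(1/2) : ℝ)) *
        ENNReal.ofReal ((y (φ k) θ - y (φ l) θ) ^ 2) ∂μ < ENNReal.ofReal ε := by
  set S := measSupport μ with hSdef
  have hS0 : S ⊆ Ici 0 := measSupport_subset_Ici hsupp
  have hSc : μ Sᶜ = 0 := measSupport_compl_null μ
  have hSct : S.Countable := by
    have hsub : S ⊆ ⋃ n : ℕ, (S ∩ Icc 0 ((n:ℝ)+1)) := by
      intro x hx
      obtain ⟨n, hn⟩ := exists_nat_ge x
      exact mem_iUnion.mpr ⟨n, hx, hS0 hx, by linarith⟩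
    exact (countable_iUnion fun n : ℕ => (hfin ((n:ℝ)+1)
      (by have : (0:ℝ) ≤ n := Nat.cast_nonneg n; linarith)).countable).mono hsub
  have hSmeas : MeasurableSet S := hSct.measurableSet
  have hsplit : ∀ f : ℝ → ℝ≥0∞, ∫⁻ θ, f θ ∂μ = ∫⁻ θ in S, f θ ∂μ := by
    intro f
    rw [← lintegral_add_compl f hSmeas, setLIntegral_measure_zero _ _ hSc, add_zero]
  have hatom : ∀ x ∈ S, μ {x} ≠ 0 := fun x hx => atom_pos hsupp hfin hx
  have hatomfin : ∀ x ∈ S, μ {x} < ⊤ := by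
    intro x hx
    have h0x : 0 ≤ x := hS0 hx
    exact lt_of_le_of_lt (measure_mono (singleton_subset_iff.mpr (mem_Icc.mpr ⟨h0x, by linarith⟩)))
      (myMeasure_Icc_lt_top hμ (x+1) (by linarith))
  -- pointwise bound
  have hb : ∀ x ∈ S, ∀ k, ENNReal.ofReal ((y k x)^2) ≤
      (ENNReal.ofReal ((1+x)^((1/2):ℝ)) * μ {x})⁻¹ := by
    intro x hx k
    rw [ENNReal.le_inv_iff_mul_le]
    calc ENNReal.ofReal ((y k x)^2) * (ENNReal.ofReal ((1+x)^((1/2):ℝ)) * μ {x})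
        = (ENNReal.ofReal ((1+x)^((1/2):ℝ)) * ENNReal.ofReal ((y k x)^2)) * μ {x} := by ring
      _ = ∫⁻ θ in {x}, ENNReal.ofReal ((1+θ)^((1/2):ℝ)) * ENNReal.ofReal ((y k θ)^2) ∂μ :=
          (lintegral_singleton
            (fun θ => ENNReal.ofReal ((1+θ)^((1/2):ℝ)) * ENNReal.ofReal ((y k θ)^2)) x).symm
      _ ≤ ∫⁻ θ, ENNReal.ofReal ((1+θ)^((1/2):ℝ)) * ENNReal.ofReal ((y k θ)^2) ∂μ :=
          setLIntegral_le_lintegral _ _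
      _ ≤ 1 := hyV k
  have hbne : ∀ x ∈ S, (ENNReal.ofReal ((1+x)^((1/2):ℝ)) * μ {x})⁻¹ ≠ ⊤ := by
    intro x hx
    rw [Ne, ENNReal.inv_eq_top]
    apply mul_ne_zero
    · exact ne_of_gt (ENNReal.ofReal_pos.mpr (Real.rpow_pos_of_pos (by linarith [mem_Ici.mp (hS0 hx)]) _))
    · exact hatom x hx
  set C : ℝ → ℝ := fun x =>
    Real.sqrt (((ENNReal.ofReal ((1+x)^((1/2):ℝ)) * μ {x})⁻¹).toReal) with hC
  have hyC : ∀ x ∈ S, ∀ k, y k x ∈ Icc (-(C x)) (C x) := by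
    intro x hx k
    have h1 : (y k x)^2 ≤ ((ENNReal.ofReal ((1+x)^((1/2):ℝ)) * μ {x})⁻¹).toReal :=
      (ENNReal.ofReal_le_iff_le_toReal (hbne x hx)).mp (hb x hx k)
    have h2 : |y k x| ≤ C x := by
      rw [← Real.sqrt_sq_eq_abs]; exact Real.sqrt_le_sqrt h1
    exact abs_le.mp h2
  by_cases hSne : S.Nonempty
  swap
  · -- μ is the zero measure
    have hμ0 : μ = 0 := by
      have : Sᶜ = univ := by
        rw [not_nonempty_iff_eq_empty] at hSne
        rw [hSne, compl_empty]
      apply Measure.measure_univ_eq_zero.mp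
      rw [← this]; exact hSc
    refine ⟨id, strictMono_id, fun ε hε => ⟨0, fun k _ l _ => ?_⟩⟩
    rw [hμ0]
    simp [ENNReal.ofReal_pos.mpr hε]
  -- enumerate S
  obtain ⟨e, hSe⟩ := hSct.exists_eq_range hSne
  have heS : ∀ i, e i ∈ S := fun i => hSe ▸ mem_range_self i
  set g : ℕ → ℕ → ℝ := fun k i => y k (e i) with hg
  have hgK : ∀ k, g k ∈ Set.pi univ (fun i => Icc (-(C (e i))) (C (e i))) :=
    fun k => fun i _ => hyC (e i) (heS i) k
  obtain ⟨a, -, φ, hφ, hconv⟩ :=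
    (isCompact_univ_pi (fun i : ℕ => isCompact_Icc)).isSeqCompact hgK
  have hptwise : ∀ i, Tendsto (fun k => y (φ k) (e i)) atTop (nhds (a i)) :=
    fun i => tendsto_pi_nhds.mp hconv i
  have hcauchy : ∀ x ∈ S, ∀ δ : ℝ, 0 < δ → ∃ N, ∀ k ≥ N, ∀ l ≥ N,
      |y (φ k) x - y (φ l) x| < δ := by
    intro x hx δ hδ
    rw [hSe] at hx
    obtain ⟨i, rfl⟩ := hx
    have hc := (hptwise i).cauchySeq
    rw [Metric.cauchySeq_iff] at hc
    obtain ⟨N, hN⟩ := hc δ hδ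
    exact ⟨N, fun k hk l hl => by rw [← Real.dist_eq]; exact hN k hk l hl⟩
  refine ⟨φ, hφ, ?_⟩
  intro ε hε
  -- choose M
  set M : ℝ := max 1 (8/ε) with hMdef
  have hM1 : (1:ℝ) ≤ M := le_max_left _ _
  have hM0 : (0:ℝ) < M := by linarith
  have hM8 : 8/ε ≤ M := le_max_right _ _
  have hMε : 4/(1+M) < ε/2 := by
    rw [div_lt_div_iff₀ (by linarith) (by norm_num)]
    have : 8 ≤ M * ε := (div_le_iff₀ hε).mp hM8
    nlinarith
  have hFfin : (S ∩ Icc 0 M).Finite := hfin M hM0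
  set Fset : Set ℝ := S ∩ Icc 0 M with hFset
  set Fs := hFfin.toFinset with hFs
  have hFsS : ∀ x ∈ Fs, x ∈ S := fun x hx => ((hFfin.mem_toFinset).mp hx).1
  set Ctot : ℝ≥0∞ := ∑ x ∈ Fs, μ {x} * ENNReal.ofReal ((1+x)^(-(1/2):ℝ)) with hCtot
  have hCtotfin : Ctot ≠ ⊤ := (ENNReal.sum_lt_top.mpr fun x hx =>
    ENNReal.mul_lt_top (hatomfin x (hFsS x hx)) ENNReal.ofReal_lt_top).ne
  set δ : ℝ := (ε/2) / (Ctot.toReal + 1) with hδdef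
  have hδpos : 0 < δ := by
    apply div_pos (by linarith)
    have := ENNReal.toReal_nonneg (a := Ctot)
    linarith
  set δ' : ℝ := min δ 1 with hδ'def
  have hδ'pos : 0 < δ' := lt_min hδpos one_pos
  have key : ∀ x : ℝ, ∃ N, x ∈ Fs → ∀ k ≥ N, ∀ l ≥ N, |y (φ k) x - y (φ l) x| < δ' := by
    intro x
    by_cases hx : x ∈ Fs
    · obtain ⟨N, hN⟩ := hcauchy x (hFsS x hx) δ' hδ'pos
      exact ⟨N, fun _ => hN⟩
    · exact ⟨0, fun h => absurd h hx⟩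
  choose Nf hNf using key
  refine ⟨Fs.sup Nf, ?_⟩
  intro k hk l hl
  -- the squared differences are small on Fs
  have hΔsmall : ∀ x ∈ Fs, (y (φ k) x - y (φ l) x)^2 ≤ δ := by
    intro x hx
    have h1 := hNf x hx k (le_trans (Finset.le_sup hx) hk) l (le_trans (Finset.le_sup hx) hl)
    have h2 : δ' ≤ δ := min_le_left _ _
    have h3 : δ' ≤ 1 := min_le_right _ _
    have h4 : (y (φ k) x - y (φ l) x)^2 = |y (φ k) x - y (φ l) x|^2 := (sq_abs _).symm
    nlinarith [abs_nonneg (y (φ k) x - y (φ l) x)]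
  set T : Set ℝ := S \ Icc 0 M with hT
  have hTmeas : MeasurableSet T := hSmeas.diff measurableSet_Icc
  have hST : S = Fset ∪ T := by
    rw [hT, hFset, inter_union_diff]
  have hdisj : Disjoint Fset T :=
    Set.disjoint_left.mpr (fun x hx hx' => hx'.2 hx.2)
  -- head bound
  have hhead : ∫⁻ θ in Fset, ENNReal.ofReal ((1 + θ) ^ (-(1/2) : ℝ)) *
      ENNReal.ofReal ((y (φ k) θ - y (φ l) θ) ^ 2) ∂μ ≤ ENNReal.ofReal (ε/2) := by
    calc ∫⁻ θ in Fset, ENNReal.ofReal ((1 + θ) ^ (-(1/2) : ℝ)) *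
        ENNReal.ofReal ((y (φ k) θ - y (φ l) θ) ^ 2) ∂μ
        = ∑ x ∈ Fs, ENNReal.ofReal ((1 + x) ^ (-(1/2) : ℝ)) *
            ENNReal.ofReal ((y (φ k) x - y (φ l) x) ^ 2) * μ {x} := by
          rw [← hFfin.coe_toFinset, lintegral_finset]
      _ ≤ ∑ x ∈ Fs, ENNReal.ofReal ((1 + x) ^ (-(1/2) : ℝ)) * ENNReal.ofReal δ * μ {x} := by
          apply Finset.sum_le_sum
          intro x hx
          exact mul_le_mul_left (mul_le_mul_right
            (ENNReal.ofReal_le_ofReal (hΔsmall x hx)) _) _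
      _ = ENNReal.ofReal δ * Ctot := by
          rw [hCtot, Finset.mul_sum]
          apply Finset.sum_congr rfl
          intros; ring
      _ = ENNReal.ofReal (δ * Ctot.toReal) := by
          rw [ENNReal.ofReal_mul hδpos.le, ENNReal.ofReal_toReal hCtotfin]
      _ ≤ ENNReal.ofReal (ε/2) := by
          apply ENNReal.ofReal_le_ofReal
          rw [hδdef, div_mul_eq_mul_div, div_le_iff₀ (by positivity)]
          have := ENNReal.toReal_nonneg (a := Ctot)
          nlinarith
  -- tail bound
  have htail : ∫⁻ θ in T, ENNReal.ofReal ((1 + θ) ^ (-(1/2) : ℝ)) *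
      ENNReal.ofReal ((y (φ k) θ - y (φ l) θ) ^ 2) ∂μ ≤ ENNReal.ofReal (4/(1+M)) := by
    have hmain : ENNReal.ofReal (1+M) * ∫⁻ θ in T, ENNReal.ofReal ((1 + θ) ^ (-(1/2) : ℝ)) *
        ENNReal.ofReal ((y (φ k) θ - y (φ l) θ) ^ 2) ∂μ ≤ 4 := by
      calc ENNReal.ofReal (1+M) * ∫⁻ θ in T, ENNReal.ofReal ((1 + θ) ^ (-(1/2) : ℝ)) *
          ENNReal.ofReal ((y (φ k) θ - y (φ l) θ) ^ 2) ∂μ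
          = ∫⁻ θ in T, ENNReal.ofReal (1+M) * (ENNReal.ofReal ((1 + θ) ^ (-(1/2) : ℝ)) *
            ENNReal.ofReal ((y (φ k) θ - y (φ l) θ) ^ 2)) ∂μ :=
            (lintegral_const_mul' _ _ ENNReal.ofReal_ne_top).symm
        _ ≤ ∫⁻ θ in T, ENNReal.ofReal ((1 + θ) ^ ((1/2) : ℝ)) *
            ENNReal.ofReal ((y (φ k) θ - y (φ l) θ) ^ 2) ∂μ := by
            apply setLIntegral_mono' hTmeas
            intro θ hθ
            have h0θ : 0 ≤ θ := hS0 hθ.1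
            have hMθ : M ≤ θ := by
              by_contra h
              push_neg at h
              exact hθ.2 ⟨h0θ, h.le⟩
            rw [← mul_assoc]
            exact mul_le_mul_left (wm_le_tail hM0.le hMθ) _
        _ ≤ ∫⁻ θ, ENNReal.ofReal ((1 + θ) ^ ((1/2) : ℝ)) *
            ENNReal.ofReal ((y (φ k) θ - y (φ l) θ) ^ 2) ∂μ := setLIntegral_le_lintegral _ _
        _ ≤ 4 := Vdiff_le_four (hymeas _) (hymeas _) (hyV _) (hyV _)
    have h4 : (4:ℝ≥0∞) = ENNReal.ofReal 4 := by norm_num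
    rw [ENNReal.ofReal_div_of_pos (by linarith), ← h4]
    rw [ENNReal.le_div_iff_mul_le
      (Or.inl (ne_of_gt (ENNReal.ofReal_pos.mpr (by linarith)))) (Or.inl ENNReal.ofReal_ne_top)]
    rwa [mul_comm]
  -- combine
  calc ∫⁻ θ, ENNReal.ofReal ((1 + θ) ^ (-(1/2) : ℝ)) *
      ENNReal.ofReal ((y (φ k) θ - y (φ l) θ) ^ 2) ∂μ
      = ∫⁻ θ in S, ENNReal.ofReal ((1 + θ) ^ (-(1/2) : ℝ)) *
        ENNReal.ofReal ((y (φ k) θ - y (φ l) θ) ^ 2) ∂μ := hsplit _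
    _ = (∫⁻ θ in Fset, ENNReal.ofReal ((1 + θ) ^ (-(1/2) : ℝ)) *
          ENNReal.ofReal ((y (φ k) θ - y (φ l) θ) ^ 2) ∂μ) +
        ∫⁻ θ in T, ENNReal.ofReal ((1 + θ) ^ (-(1/2) : ℝ)) *
          ENNReal.ofReal ((y (φ k) θ - y (φ l) θ) ^ 2) ∂μ := by
        rw [hST, lintegral_union hTmeas hdisj]
    _ ≤ ENNReal.ofReal (ε/2) + ENNReal.ofReal (4/(1+M)) := add_le_add hhead htail
    _ = ENNReal.ofReal (ε/2 + 4/(1+M)) := (ENNReal.ofReal_add (by linarith) (by positivity)).symm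
    _ < ENNReal.ofReal ε := by
        rw [ENNReal.ofReal_lt_ofReal_iff hε]
        linarith

/-- The embedding `V ↪ H` of the weighted `L²` spaces (weights `(1+θ)^{1/2}` and
`(1+θ)^{-1/2}`) is compact — i.e. every sequence in the unit ball of `V` has a
subsequence which is Cauchy in the `H`-norm — if and only if `supp μ ∩ [0,m]`
is finite for every `m > 0`. -/
theorem stmt10 (μ : Measure ℝ) (hsupp : μ (Set.Iio 0) = 0)
    (hμ : ∫⁻ θ, ENNReal.ofReal ((1 + θ) ^ (-(1/2) : ℝ)) ∂μ < ⊤) :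
    (∀ y : ℕ → ℝ → ℝ, (∀ k, Measurable (y k)) →
        (∀ k, ∫⁻ θ, ENNReal.ofReal ((1 + θ) ^ ((1/2) : ℝ)) *
          ENNReal.ofReal ((y k θ) ^ 2) ∂μ ≤ 1) →
        ∃ φ : ℕ → ℕ, StrictMono φ ∧ ∀ ε : ℝ, 0 < ε → ∃ N : ℕ, ∀ k ≥ N, ∀ l ≥ N,
          ∫⁻ θ, ENNReal.ofReal ((1 + θ) ^ (-(1/2) : ℝ)) *
            ENNReal.ofReal ((y (φ k) θ - y (φ l) θ) ^ 2) ∂μ < ENNReal.ofReal ε)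
      ↔ (∀ m : ℝ, 0 < m → (measSupport μ ∩ Set.Icc 0 m).Finite) := by
  constructor
  · intro hcpt m hm
    by_contra hinf
    obtain ⟨y, h1, h2, h3⟩ := not_compact_of_infinite hμ hm hinf
    obtain ⟨φ, hφ, hC⟩ := hcpt y h1 h2
    obtain ⟨N, hN⟩ := hC ((1+m)⁻¹) (by positivity)
    obtain ⟨k, hk, l, hl, hge⟩ := h3 φ hφ N
    exact absurd (hN k hk l hl) (not_lt.mpr hge)
  · intro hfin y hymeas hyV
    exact compact_of_finite hsupp hμ hfin y hymeas hyV
end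

section
/- Let μ be a Borel measure on [0,∞) with ∫(1+θ)^{-1/2}dμ(θ) < ∞, and let c_b, c_σ ≥ 0 be constants. Then there exists a constant C > 0 such that for every Borel measurable y : [0,∞) → ℝ with ‖y‖_V² := ∫(1+θ)^{1/2}|y|²dμ < ∞, one has 2‖y‖_H² − 2‖y‖_V² + 2 c_b |μ[y]| ‖y‖_V + c_σ |μ[y]|² ≤ C‖y‖_H² − ‖y‖_V², where ‖y‖_H² = ∫(1+θ)^{-1/2}|y|²dμ and μ[y] = ∫ y dμ. -/
open MeasureTheory ENNReal Set

/-- Cauchy–Schwarz-type inequality for integrals, via the discriminant trick. -/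
lemma cs_aux {ν : Measure ℝ} {w u y : ℝ → ℝ}
    (hw : Integrable w ν) (hu : Integrable u ν) (hy : Integrable y ν)
    (hae : ∀ᵐ θ ∂ν, 0 ≤ w θ ∧ 0 ≤ u θ ∧ (y θ)^2 ≤ w θ * u θ) :
    (∫ θ, |y θ| ∂ν)^2 ≤ (∫ θ, w θ ∂ν) * (∫ θ, u θ ∂ν) := by
  have hyabs : Integrable (fun θ => |y θ|) ν := hy.abs
  set M := ∫ θ, |y θ| ∂ν with hM
  set W := ∫ θ, w θ ∂ν with hW
  set U := ∫ θ, u θ ∂ν with hU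
  have hW0 : 0 ≤ W := integral_nonneg_of_ae (hae.mono fun θ h => h.1)
  have hU0 : 0 ≤ U := integral_nonneg_of_ae (hae.mono fun θ h => h.2.1)
  have hM0 : 0 ≤ M := integral_nonneg fun θ => abs_nonneg _
  have key : ∀ x : ℝ, 0 ≤ W * (x*x) + (-(2*M)) * x + U := by
    intro x
    rcases le_or_gt x 0 with hx | hx
    · have h1 : 0 ≤ W * (x*x) := mul_nonneg hW0 (mul_self_nonneg x)
      have h2 : 0 ≤ (-(2*M)) * x := by nlinarith
      linarith
    · have hpt : ∀ᵐ θ ∂ν, 2*x*|y θ| ≤ x^2 * w θ + u θ := by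
        filter_upwards [hae] with θ h
        obtain ⟨h1, h2, h3⟩ := h
        have hy' : |y θ| ≤ Real.sqrt (w θ) * Real.sqrt (u θ) := by
          rw [← Real.sqrt_mul h1]
          calc |y θ| = Real.sqrt ((y θ)^2) := (Real.sqrt_sq_eq_abs _).symm
            _ ≤ _ := Real.sqrt_le_sqrt h3
        have h4 : 2*x*|y θ| ≤ 2*x*(Real.sqrt (w θ) * Real.sqrt (u θ)) :=
          mul_le_mul_of_nonneg_left hy' (by positivity)
        have h5 := two_mul_le_add_sq (x * Real.sqrt (w θ)) (Real.sqrt (u θ))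
        have e1 : (x * Real.sqrt (w θ))^2 = x^2 * w θ := by
          rw [mul_pow, Real.sq_sqrt h1]
        have e2 : (Real.sqrt (u θ))^2 = u θ := Real.sq_sqrt h2
        have e3 : 2*x*(Real.sqrt (w θ) * Real.sqrt (u θ))
            = 2*(x*Real.sqrt (w θ))*Real.sqrt (u θ) := by ring
        rw [e1, e2] at h5
        linarith
      have hi1 : Integrable (fun θ => 2*x*|y θ|) ν := hyabs.const_mul _
      have hi2 : Integrable (fun θ => x^2 * w θ + u θ) ν := (hw.const_mul _).add hu
      have hI := integral_mono_ae hi1 hi2 hpt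
      rw [integral_const_mul, integral_add (hw.const_mul _) hu, integral_const_mul] at hI
      nlinarith
  have hd := discrim_le_zero key
  rw [discrim] at hd
  nlinarith

set_option maxHeartbeats 1000000 in
/-- Scalar core of the weak-monotonicity/coercivity estimate:
`2‖y‖_H² - 2‖y‖_V² + 2 c_b |μ[y]| ‖y‖_V + c_σ |μ[y]|² ≤ C‖y‖_H² - ‖y‖_V²`. -/
theorem stmt14 (μ : Measure ℝ) (hsupp : μ (Set.Iio 0) = 0)
    (hμ : ∫⁻ θ, ENNReal.ofReal ((1 + θ) ^ (-(1/2) : ℝ)) ∂μ < ⊤)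
    (cb cσ : ℝ) (hcb : 0 ≤ cb) (hcσ : 0 ≤ cσ) :
    ∃ C : ℝ, 0 < C ∧ ∀ y : ℝ → ℝ, Measurable y →
      Integrable (fun θ => (1 + θ) ^ ((1/2) : ℝ) * (y θ) ^ 2) μ →
      2 * (∫ θ, (1 + θ) ^ (-(1/2) : ℝ) * (y θ) ^ 2 ∂μ)
          - 2 * (∫ θ, (1 + θ) ^ ((1/2) : ℝ) * (y θ) ^ 2 ∂μ)
          + 2 * cb * |∫ θ, y θ ∂μ| *
              Real.sqrt (∫ θ, (1 + θ) ^ ((1/2) : ℝ) * (y θ) ^ 2 ∂μ)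
          + cσ * |∫ θ, y θ ∂μ| ^ 2
        ≤ C * (∫ θ, (1 + θ) ^ (-(1/2) : ℝ) * (y θ) ^ 2 ∂μ)
          - ∫ θ, (1 + θ) ^ ((1/2) : ℝ) * (y θ) ^ 2 ∂μ := by
  have hm1 : Measurable (fun θ : ℝ => (1 + θ) ^ (-(1/2) : ℝ)) := by fun_prop
  have hm2 : Measurable (fun θ : ℝ => (1 + θ) ^ ((1/2) : ℝ)) := by fun_prop
  have haθ : ∀ᵐ θ ∂μ, 0 ≤ θ := by
    rw [ae_iff]
    have hset : {a : ℝ | ¬ 0 ≤ a} = Set.Iio 0 := by ext a; simp [not_le]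
    rw [hset]; exact hsupp
  have hfpos : ∀ θ : ℝ, 0 ≤ θ → 0 < (1 + θ) ^ (-(1/2) : ℝ) := fun θ h =>
    Real.rpow_pos_of_pos (by linarith) _
  have hgpos : ∀ θ : ℝ, 0 ≤ θ → 0 < (1 + θ) ^ ((1/2) : ℝ) := fun θ h =>
    Real.rpow_pos_of_pos (by linarith) _
  have hfg : ∀ θ : ℝ, 0 ≤ θ → (1 + θ) ^ ((1/2) : ℝ) * (1 + θ) ^ (-(1/2) : ℝ) = 1 := by
    intro θ h
    rw [← Real.rpow_add (by linarith : (0:ℝ) < 1 + θ)]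
    norm_num
  have hfle : ∀ θ : ℝ, 0 ≤ θ → (1 + θ) ^ (-(1/2) : ℝ) ≤ (1 + θ) ^ ((1/2) : ℝ) := fun θ h =>
    Real.rpow_le_rpow_of_exponent_le (by linarith) (by norm_num)
  have hgf : ∀ θ : ℝ, 0 ≤ θ →
      (1 + θ) ^ ((1/2) : ℝ) = (1 + θ) * (1 + θ) ^ (-(1/2) : ℝ) := by
    intro θ h
    calc (1 + θ) ^ ((1/2) : ℝ) = (1 + θ) ^ ((1 : ℝ) + -(1/2)) := by norm_num
      _ = (1 + θ) ^ (1 : ℝ) * (1 + θ) ^ (-(1/2) : ℝ) :=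
          Real.rpow_add (by linarith) _ _
      _ = (1 + θ) * (1 + θ) ^ (-(1/2) : ℝ) := by rw [Real.rpow_one]
  have hfnn : ∀ᵐ θ ∂μ, 0 ≤ (1 + θ) ^ (-(1/2) : ℝ) := by
    filter_upwards [haθ] with θ h; exact (hfpos θ h).le
  have hf_int : Integrable (fun θ : ℝ => (1 + θ) ^ (-(1/2) : ℝ)) μ := by
    refine ⟨hm1.aestronglyMeasurable, ?_⟩
    rw [hasFiniteIntegral_iff_ofReal hfnn]
    exact hμ
  have hIf0 : 0 ≤ ∫ θ, (1 + θ) ^ (-(1/2) : ℝ) ∂μ := integral_nonneg_of_ae hfnn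
  set If := ∫ θ, (1 + θ) ^ (-(1/2) : ℝ) ∂μ with hIfdef
  set K := 2*cb^2 + cσ with hKdef
  have hK0 : 0 ≤ K := by positivity
  set δ := 1/(8*(K+1)) with hδdef
  have hδ0 : 0 < δ := by positivity
  obtain ⟨N, hN⟩ : ∃ N : ℕ,
      (μ.withDensity (fun θ => ENNReal.ofReal ((1 + θ) ^ (-(1/2) : ℝ)))) (Set.Ioi (N:ℝ))
        < ENNReal.ofReal δ := by
    set ν := μ.withDensity (fun θ => ENNReal.ofReal ((1 + θ) ^ (-(1/2) : ℝ))) with hν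
    have hν_univ : ν Set.univ < ⊤ := by
      rw [hν, withDensity_apply _ MeasurableSet.univ, Measure.restrict_univ]
      exact hμ
    have htt : Filter.Tendsto (fun n : ℕ => ν (Set.Ioi (n:ℝ))) Filter.atTop
        (nhds (ν (⋂ n : ℕ, Set.Ioi (n:ℝ)))) := by
      exact tendsto_measure_iInter_atTop
        (fun n => measurableSet_Ioi.nullMeasurableSet)
        (fun i j hij => Set.Ioi_subset_Ioi (by exact_mod_cast hij))
        ⟨0, ((lt_of_le_of_lt (measure_mono (Set.subset_univ _)) hν_univ)).ne⟩
    have hempty : (⋂ n : ℕ, Set.Ioi ((n : ℕ) : ℝ)) = (∅ : Set ℝ) := by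
      ext x
      simp only [Set.mem_iInter, Set.mem_Ioi, Set.mem_empty_iff_false, iff_false,
        not_forall, not_lt]
      obtain ⟨n, hn⟩ := exists_nat_gt x
      exact ⟨n, hn.le⟩
    rw [hempty, measure_empty] at htt
    exact (htt.eventually_lt_const (ENNReal.ofReal_pos.mpr hδ0)).exists
  set R := (N : ℝ) with hRdef
  have hR0 : (0:ℝ) ≤ R := Nat.cast_nonneg N
  have hτ : ∫ θ in Set.Ioi R, (1 + θ) ^ (-(1/2) : ℝ) ∂μ ≤ δ := by
    have h1 : ∫ θ in Set.Ioi R, (1 + θ) ^ (-(1/2) : ℝ) ∂μ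
        = (∫⁻ θ in Set.Ioi R, ENNReal.ofReal ((1 + θ) ^ (-(1/2) : ℝ)) ∂μ).toReal :=
      integral_eq_lintegral_of_nonneg_ae (ae_restrict_of_ae hfnn)
        hm1.aestronglyMeasurable.restrict
    rw [h1, ← withDensity_apply _ measurableSet_Ioi]
    exact ENNReal.toReal_le_of_le_ofReal hδ0.le hN.le
  have hg_res : Integrable (fun θ : ℝ => (1 + θ) ^ ((1/2) : ℝ)) (μ.restrict (Set.Iic R)) := by
    refine Integrable.mono' ((hf_int.restrict).const_mul (1+R))
      hm2.aestronglyMeasurable.restrict ?_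
    filter_upwards [ae_restrict_of_ae haθ, ae_restrict_mem measurableSet_Iic] with θ h1 h2
    rw [Real.norm_eq_abs, abs_of_nonneg (hgpos θ h1).le, hgf θ h1]
    exact mul_le_mul_of_nonneg_right (by linarith [Set.mem_Iic.mp h2]) (hfpos θ h1).le
  have hA : ∫ θ in Set.Iic R, (1 + θ) ^ ((1/2) : ℝ) ∂μ ≤ (1+R) * If := by
    have h1 : ∫ θ in Set.Iic R, (1 + θ) ^ ((1/2) : ℝ) ∂μ
        ≤ ∫ θ in Set.Iic R, (1+R) * (1 + θ) ^ (-(1/2) : ℝ) ∂μ := by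
      refine integral_mono_ae hg_res ((hf_int.restrict).const_mul (1+R)) ?_
      filter_upwards [ae_restrict_of_ae haθ, ae_restrict_mem measurableSet_Iic] with θ h1 h2
      rw [hgf θ h1]
      exact mul_le_mul_of_nonneg_right (by linarith [Set.mem_Iic.mp h2]) (hfpos θ h1).le
    have h2 : ∫ θ in Set.Iic R, (1+R) * (1 + θ) ^ (-(1/2) : ℝ) ∂μ
        = (1+R) * ∫ θ in Set.Iic R, (1 + θ) ^ (-(1/2) : ℝ) ∂μ := integral_const_mul _ _
    have h3 : ∫ θ in Set.Iic R, (1 + θ) ^ (-(1/2) : ℝ) ∂μ ≤ If :=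
      setIntegral_le_integral hf_int hfnn
    have h4 := mul_le_mul_of_nonneg_left h3 (show (0:ℝ) ≤ 1+R by linarith)
    linarith
  have hA0 : 0 ≤ ∫ θ in Set.Iic R, (1 + θ) ^ ((1/2) : ℝ) ∂μ :=
    integral_nonneg_of_ae (ae_restrict_of_ae (haθ.mono fun θ h => (hgpos θ h).le))
  refine ⟨2*K*((1+R)*If) + 3, ?_, ?_⟩
  · have h0 : 0 ≤ 2*K*((1+R)*If) :=
      mul_nonneg (by linarith) (mul_nonneg (by linarith) hIf0)
    linarith
  intro y hym hVint
  set V := ∫ θ, (1 + θ) ^ ((1/2) : ℝ) * (y θ) ^ 2 ∂μ with hVdef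
  have hmudH : Integrable (fun θ : ℝ => (1 + θ) ^ (-(1/2) : ℝ) * (y θ) ^ 2) μ := by
    refine Integrable.mono' hVint ((hm1.mul (hym.pow_const 2)).aestronglyMeasurable) ?_
    filter_upwards [haθ] with θ h
    rw [Real.norm_eq_abs, abs_of_nonneg (mul_nonneg (hfpos θ h).le (sq_nonneg _))]
    exact mul_le_mul_of_nonneg_right (hfle θ h) (sq_nonneg _)
  set H := ∫ θ, (1 + θ) ^ (-(1/2) : ℝ) * (y θ) ^ 2 ∂μ with hHdef
  have hH0 : 0 ≤ H :=
    integral_nonneg_of_ae (haθ.mono fun θ h => mul_nonneg (hfpos θ h).le (sq_nonneg _))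
  have hV0 : 0 ≤ V :=
    integral_nonneg_of_ae (haθ.mono fun θ h => mul_nonneg (hgpos θ h).le (sq_nonneg _))
  have hHV : H ≤ V := integral_mono_ae hmudH hVint
    (haθ.mono fun θ h => mul_le_mul_of_nonneg_right (hfle θ h) (sq_nonneg _))
  have hy_int : Integrable y μ := by
    refine Integrable.mono' ((hf_int.add hVint).const_mul (1/2))
      hym.aestronglyMeasurable ?_
    filter_upwards [haθ] with θ h
    rw [Real.norm_eq_abs]
    have h5 := two_mul_le_add_sq (Real.sqrt ((1 + θ) ^ (-(1/2) : ℝ)))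
      (Real.sqrt ((1 + θ) ^ ((1/2) : ℝ)) * |y θ|)
    have e1 : Real.sqrt ((1 + θ) ^ (-(1/2) : ℝ)) ^ 2 = (1 + θ) ^ (-(1/2) : ℝ) :=
      Real.sq_sqrt (hfpos θ h).le
    have e2 : (Real.sqrt ((1 + θ) ^ ((1/2) : ℝ)) * |y θ|) ^ 2
        = (1 + θ) ^ ((1/2) : ℝ) * (y θ) ^ 2 := by
      rw [mul_pow, Real.sq_sqrt (hgpos θ h).le, sq_abs]
    have e3 : Real.sqrt ((1 + θ) ^ (-(1/2) : ℝ)) * Real.sqrt ((1 + θ) ^ ((1/2) : ℝ)) = 1 := by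
      rw [← Real.sqrt_mul (hfpos θ h).le,
        show (1 + θ) ^ (-(1/2) : ℝ) * (1 + θ) ^ ((1/2) : ℝ) = 1 from by
          rw [mul_comm]; exact hfg θ h,
        Real.sqrt_one]
    have e4 : 2 * Real.sqrt ((1 + θ) ^ (-(1/2) : ℝ))
          * (Real.sqrt ((1 + θ) ^ ((1/2) : ℝ)) * |y θ|)
        = 2 * |y θ| * (Real.sqrt ((1 + θ) ^ (-(1/2) : ℝ))
          * Real.sqrt ((1 + θ) ^ ((1/2) : ℝ))) := by ring
    rw [e3, mul_one] at e4
    rw [e1, e2, e4] at h5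
    have : |y θ| ≤ 1/2 * ((1 + θ) ^ (-(1/2) : ℝ) + (1 + θ) ^ ((1/2) : ℝ) * (y θ) ^ 2) := by
      linarith
    simpa using this
  have habs_int : Integrable (fun θ => |y θ|) μ := hy_int.abs
  have hsplit : ∫ θ, |y θ| ∂μ
      = (∫ θ in Set.Iic R, |y θ| ∂μ) + ∫ θ in Set.Ioi R, |y θ| ∂μ := by
    have hc := integral_add_compl (measurableSet_Iic (a := R)) habs_int
    rw [Set.compl_Iic] at hc
    exact hc.symm
  have hm10 : 0 ≤ ∫ θ in Set.Iic R, |y θ| ∂μ := integral_nonneg fun θ => abs_nonneg _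
  have hm20 : 0 ≤ ∫ θ in Set.Ioi R, |y θ| ∂μ := integral_nonneg fun θ => abs_nonneg _
  have hcs1 : (∫ θ in Set.Iic R, |y θ| ∂μ)^2
      ≤ (∫ θ in Set.Iic R, (1 + θ) ^ ((1/2) : ℝ) ∂μ)
        * (∫ θ in Set.Iic R, (1 + θ) ^ (-(1/2) : ℝ) * (y θ) ^ 2 ∂μ) := by
    apply cs_aux hg_res hmudH.restrict hy_int.restrict
    filter_upwards [ae_restrict_of_ae haθ] with θ h
    refine ⟨(hgpos θ h).le, mul_nonneg (hfpos θ h).le (sq_nonneg _), ?_⟩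
    have e : (1 + θ) ^ ((1/2) : ℝ) * ((1 + θ) ^ (-(1/2) : ℝ) * (y θ) ^ 2) = (y θ) ^ 2 := by
      rw [← mul_assoc, hfg θ h, one_mul]
    rw [e]
  have hcs2 : (∫ θ in Set.Ioi R, |y θ| ∂μ)^2
      ≤ (∫ θ in Set.Ioi R, (1 + θ) ^ (-(1/2) : ℝ) ∂μ)
        * (∫ θ in Set.Ioi R, (1 + θ) ^ ((1/2) : ℝ) * (y θ) ^ 2 ∂μ) := by
    apply cs_aux hf_int.restrict hVint.restrict hy_int.restrict
    filter_upwards [ae_restrict_of_ae haθ] with θ h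
    refine ⟨(hfpos θ h).le, mul_nonneg (hgpos θ h).le (sq_nonneg _), ?_⟩
    have e : (1 + θ) ^ (-(1/2) : ℝ) * ((1 + θ) ^ ((1/2) : ℝ) * (y θ) ^ 2) = (y θ) ^ 2 := by
      rw [← mul_assoc, mul_comm ((1 + θ) ^ (-(1/2) : ℝ)), hfg θ h, one_mul]
    rw [e]
  have hH1 : ∫ θ in Set.Iic R, (1 + θ) ^ (-(1/2) : ℝ) * (y θ) ^ 2 ∂μ ≤ H :=
    setIntegral_le_integral hmudH
      (haθ.mono fun θ h => mul_nonneg (hfpos θ h).le (sq_nonneg _))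
  have hH1' : 0 ≤ ∫ θ in Set.Iic R, (1 + θ) ^ (-(1/2) : ℝ) * (y θ) ^ 2 ∂μ :=
    integral_nonneg_of_ae (ae_restrict_of_ae
      (haθ.mono fun θ h => mul_nonneg (hfpos θ h).le (sq_nonneg _)))
  have hV2 : ∫ θ in Set.Ioi R, (1 + θ) ^ ((1/2) : ℝ) * (y θ) ^ 2 ∂μ ≤ V :=
    setIntegral_le_integral hVint
      (haθ.mono fun θ h => mul_nonneg (hgpos θ h).le (sq_nonneg _))
  have hV2' : 0 ≤ ∫ θ in Set.Ioi R, (1 + θ) ^ ((1/2) : ℝ) * (y θ) ^ 2 ∂μ :=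
    integral_nonneg_of_ae (ae_restrict_of_ae
      (haθ.mono fun θ h => mul_nonneg (hgpos θ h).le (sq_nonneg _)))
  have hm1sq : (∫ θ in Set.Iic R, |y θ| ∂μ)^2 ≤ ((1+R)*If) * H :=
    le_trans hcs1 (mul_le_mul hA hH1 hH1' (mul_nonneg (by linarith) hIf0))
  have hm2sq : (∫ θ in Set.Ioi R, |y θ| ∂μ)^2 ≤ δ * V :=
    le_trans hcs2 (mul_le_mul hτ hV2 hV2' hδ0.le)
  have hm : |∫ θ, y θ ∂μ| ≤ (∫ θ in Set.Iic R, |y θ| ∂μ) + ∫ θ in Set.Ioi R, |y θ| ∂μ := by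
    have hnorm := norm_integral_le_integral_norm (f := y) (μ := μ)
    simp only [Real.norm_eq_abs] at hnorm
    rw [hsplit] at hnorm
    exact hnorm
  have hmsq : |∫ θ, y θ ∂μ|^2 ≤ 2*(((1+R)*If)*H) + 2*(δ*V) := by
    nlinarith [sq_nonneg ((∫ θ in Set.Iic R, |y θ| ∂μ) - ∫ θ in Set.Ioi R, |y θ| ∂μ),
      abs_nonneg (∫ θ, y θ ∂μ)]
  have hsqV : Real.sqrt V ^ 2 = V := Real.sq_sqrt hV0
  have hyoung : 2*cb*|∫ θ, y θ ∂μ| * Real.sqrt V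
      ≤ (1/2)*V + 2*cb^2*|∫ θ, y θ ∂μ|^2 := by
    nlinarith [sq_nonneg (Real.sqrt V - 2*cb*|∫ θ, y θ ∂μ|)]
  have h4 : 2*cb^2*|∫ θ, y θ ∂μ|^2 + cσ*|∫ θ, y θ ∂μ|^2 = K*|∫ θ, y θ ∂μ|^2 := by
    rw [hKdef]; ring
  have h2 := mul_le_mul_of_nonneg_left hmsq hK0
  have e2 : K*(2*(((1+R)*If)*H) + 2*(δ*V)) = 2*K*((1+R)*If)*H + (K*(2*δ))*V := by ring
  rw [e2] at h2
  have hKδ : K*(2*δ) ≤ 1/4 := by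
    have e : K*(2*δ) = K/(4*(K+1)) := by
      rw [hδdef]; field_simp; ring
    rw [e, div_le_iff₀ (by linarith : (0:ℝ) < 4*(K+1))]
    linarith
  have h3 := mul_le_mul_of_nonneg_right hKδ hV0
  clear_value If K δ R V H
  linarith [hyoung, h2, h3, h4, hHV, hH0, hV0]
end

section
/- Let (E, ℰ) be a measurable space, P : E × ℰ → [0,1] a Markov kernel, and π a probability measure on E invariant under P (i.e., ∫ P(x,A) dπ(x) = π(A) for all A ∈ ℰ). Suppose V : E → [0,∞) is measurable and there exist constants α ∈ [0,1) and K ≥ 0 with ∫ V(x') P(x, dx') ≤ α V(x) + K for all x ∈ E. Then ∫ V dπ ≤ K/(1−α); in particular V is π-integrable. -/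
open MeasureTheory ProbabilityTheory
open scoped ENNReal

/-- Invariant-measure moment bound: if `π` is invariant for the Markov kernel `P` and
`PV ≤ αV + K` with `α ∈ [0,1)`, then `∫ V dπ ≤ K/(1-α)`; in particular `V` is
`π`-integrable. -/
theorem stmt15 {E : Type*} [MeasurableSpace E] (P : Kernel E E) [IsMarkovKernel P]
    (π : Measure E) [IsProbabilityMeasure π]
    (hinv : ∀ A : Set E, MeasurableSet A → ∫⁻ x, P x A ∂π = π A)
    (V : E → ℝ) (hV : Measurable V) (hV0 : ∀ x, 0 ≤ V x)
    (α K : ℝ) (hα0 : 0 ≤ α) (hα1 : α < 1) (hK : 0 ≤ K)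
    (hdrift : ∀ x, ∫⁻ x', ENNReal.ofReal (V x') ∂(P x) ≤ ENNReal.ofReal (α * V x + K)) :
    ∫⁻ x, ENNReal.ofReal (V x) ∂π ≤ ENNReal.ofReal (K / (1 - α)) := by
  set W : E → ℝ≥0∞ := fun x => ENNReal.ofReal (V x) with hW
  set a : ℝ≥0∞ := ENNReal.ofReal α with ha
  set k : ℝ≥0∞ := ENNReal.ofReal K with hk
  have hWmeas : Measurable W := hV.ennreal_ofReal
  have hWlt : ∀ x, W x ≠ ∞ := fun x => ENNReal.ofReal_ne_top
  have ha1 : a < 1 := by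
    rw [ha, ← ENNReal.ofReal_one]
    exact (ENNReal.ofReal_lt_ofReal_iff one_pos).mpr hα1
  -- RHS equals k / (1 - a)
  have hRHS : ENNReal.ofReal (K / (1 - α)) = k * (1 - a)⁻¹ := by
    rw [ENNReal.ofReal_div_of_pos (by linarith), div_eq_mul_inv]
    congr 1
    rw [ha, ENNReal.ofReal_sub 1 hα0, ENNReal.ofReal_one]
  -- drift in ENNReal
  have hdrift' : ∀ x, ∫⁻ x', W x' ∂(P x) ≤ a * W x + k := by
    intro x
    refine (hdrift x).trans ?_
    rw [ENNReal.ofReal_add (mul_nonneg hα0 (hV0 x)) hK, ENNReal.ofReal_mul hα0]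
  -- invariance for lintegrals
  have hbind : π.bind (fun x => P x) = π := by
    ext A hA
    rw [Measure.bind_apply hA (P.measurable.aemeasurable)]
    exact hinv A hA
  have hinvf : ∀ f : E → ℝ≥0∞, Measurable f →
      ∫⁻ x, ∫⁻ y, f y ∂(P x) ∂π = ∫⁻ y, f y ∂π := by
    intro f hf
    conv_rhs => rw [← hbind]
    rw [Measure.lintegral_bind P.measurable.aemeasurable hf.aemeasurable]
  -- partial geometric sums
  set C : ℝ≥0∞ := k * (1 - a)⁻¹ with hC
  have hsum : ∀ n : ℕ, k * ∑ i ∈ Finset.range n, a ^ i ≤ C := by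
    intro n
    rw [hC]
    gcongr
    rw [← ENNReal.tsum_geometric]
    exact ENNReal.sum_le_tsum _
  -- the truncated iterates
  have main : ∀ N : ℕ, ∫⁻ x, W x ⊓ (N : ℝ≥0∞) ∂π ≤ C := by
    intro N
    set f : ℕ → E → ℝ≥0∞ := fun n => Nat.rec (fun x => W x ⊓ N)
      (fun _ g x => ∫⁻ y, g y ∂(P x)) n with hf
    have hf0 : f 0 = fun x => W x ⊓ N := rfl
    have hfsucc : ∀ n, f (n + 1) = fun x => ∫⁻ y, f n y ∂(P x) := fun n => rfl
    have hfmeas : ∀ n, Measurable (f n) := by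
      intro n
      induction n with
      | zero => exact hWmeas.inf measurable_const
      | succ n ih => rw [hfsucc]; exact ih.lintegral_kernel
    have hint : ∀ n, ∫⁻ x, f n x ∂π = ∫⁻ x, W x ⊓ N ∂π := by
      intro n
      induction n with
      | zero => rfl
      | succ n ih =>
        rw [hfsucc, hinvf (f n) (hfmeas n), ih]
    have hbound : ∀ n, ∀ x, f n x ≤ (a ^ n * W x + k * ∑ i ∈ Finset.range n, a ^ i) ⊓ N := by
      intro n
      induction n with
      | zero =>
        intro x
        simp only [hf0, pow_zero, one_mul, Finset.range_zero, Finset.sum_empty, mul_zero,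
          add_zero]
        exact le_refl _
      | succ n ih =>
        intro x
        rw [hfsucc]
        refine le_inf ?_ ?_
        · calc ∫⁻ y, f n y ∂(P x)
              ≤ ∫⁻ y, a ^ n * W y + k * ∑ i ∈ Finset.range n, a ^ i ∂(P x) := by
                refine lintegral_mono fun y => ?_
                exact (ih y).trans inf_le_left
            _ = a ^ n * ∫⁻ y, W y ∂(P x) + k * ∑ i ∈ Finset.range n, a ^ i := by
                rw [lintegral_add_right _ measurable_const, lintegral_const_mul _ hWmeas,
                  lintegral_const, measure_univ, mul_one]
            _ ≤ a ^ n * (a * W x + k) + k * ∑ i ∈ Finset.range n, a ^ i := by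
                gcongr
                exact hdrift' x
            _ = a ^ (n + 1) * W x + k * ∑ i ∈ Finset.range (n + 1), a ^ i := by
                rw [Finset.sum_range_succ]
                ring
        · calc ∫⁻ y, f n y ∂(P x) ≤ ∫⁻ _, (N : ℝ≥0∞) ∂(P x) := by
                refine lintegral_mono fun y => (ih y).trans inf_le_right
            _ = N := by rw [lintegral_const, measure_univ, mul_one]
    -- integrate the bound, use dominated convergence in n
    have key : ∀ n, ∫⁻ x, W x ⊓ N ∂π ≤ (∫⁻ x, (a ^ n * W x) ⊓ N ∂π) + C := by
      intro n
      rw [← hint n]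
      calc ∫⁻ x, f n x ∂π
          ≤ ∫⁻ x, ((a ^ n * W x) ⊓ N) + k * ∑ i ∈ Finset.range n, a ^ i ∂π := by
            refine lintegral_mono fun x => ?_
            refine (hbound n x).trans ?_
            rcases le_total (a ^ n * W x) (N : ℝ≥0∞) with h | h
            · rw [inf_eq_left.mpr h]
              exact inf_le_left
            · rw [inf_eq_right.mpr h]
              exact inf_le_right.trans le_self_add
        _ = (∫⁻ x, (a ^ n * W x) ⊓ N ∂π) + k * ∑ i ∈ Finset.range n, a ^ i := by
            rw [lintegral_add_right _ measurable_const, lintegral_const, measure_univ, mul_one]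
        _ ≤ (∫⁻ x, (a ^ n * W x) ⊓ N ∂π) + C := by gcongr; exact hsum n
    have htend : Filter.Tendsto (fun n => (∫⁻ x, (a ^ n * W x) ⊓ N ∂π) + C)
        Filter.atTop (nhds (0 + C)) := by
      refine Filter.Tendsto.add_const C ?_
      have h0 : Filter.Tendsto (fun n => ∫⁻ x, (a ^ n * W x) ⊓ N ∂π)
          Filter.atTop (nhds (∫⁻ _, (0 : ℝ≥0∞) ∂π)) := by
        refine tendsto_lintegral_of_dominated_convergence (fun _ => (N : ℝ≥0∞))
          (fun n => ((hWmeas.const_mul _).inf measurable_const))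
          (fun n => Filter.Eventually.of_forall fun x => inf_le_right) ?_ ?_
        · simp [lintegral_const]
        · refine Filter.Eventually.of_forall fun x => ?_
          have h1 : Filter.Tendsto (fun n => a ^ n * W x) Filter.atTop (nhds (0 * W x)) :=
            ENNReal.Tendsto.mul_const
              (ENNReal.tendsto_pow_atTop_nhds_zero_of_lt_one ha1) (Or.inr (hWlt x))
          rw [zero_mul] at h1
          have := h1.min (tendsto_const_nhds (x := (N : ℝ≥0∞)))
          simpa [min_eq_left (zero_le : (0 : ℝ≥0∞) ≤ N)] using this
      simpa [lintegral_const] using h0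
    have := ge_of_tendsto' htend (fun n => key n)
    rwa [zero_add] at this
  -- monotone convergence in N
  have hWsup : ∫⁻ x, W x ∂π = ⨆ N : ℕ, ∫⁻ x, W x ⊓ (N : ℝ≥0∞) ∂π := by
    rw [← lintegral_iSup (f := fun (N : ℕ) x => W x ⊓ (N : ℝ≥0∞)) (fun N => hWmeas.inf measurable_const)]
    · congr 1
      funext x
      refine le_antisymm ?_ (iSup_le fun N => inf_le_left)
      obtain ⟨N, hN⟩ := ENNReal.exists_nat_gt (hWlt x)
      exact le_iSup_of_le N (le_inf (le_refl _) hN.le)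
    · intro m n hmn
      intro x
      exact inf_le_inf_left _ (by exact_mod_cast Nat.cast_le.mpr hmn)
  rw [hRHS, hWsup]
  exact iSup_le fun N => main N
end

section
/- Let μ be a Borel measure on [0,∞), κ > 0 with μ([0,κ)) = 0, and M : [0,∞) → [0,∞) Borel measurable with ∫_{[κ,∞)} θ^{-1/2} dμ < ∞ and ∫_{[κ,∞)} θ^{-3/2} M(θ)² dμ < ∞. For m ≥ κ and T > 0 define K̄_m(T-integral) := ∫₀ᵀ ( ∫_{[m,∞)} e^{-θ t} M(θ) dμ(θ) ) dt. Then K̄_m ≤ ( ∫_{[m,∞)} θ^{-1/2} dμ )^{1/2} ( ∫_{[m,∞)} θ^{-3/2} M(θ)² dμ )^{1/2}, and consequently K̄_m → 0 as m → ∞, uniformly in T. -/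
open MeasureTheory ENNReal Set Filter Topology

private lemma stmt17_tail (μ : Measure ℝ) (κ : ℝ) (g : ℝ → ℝ≥0∞)
    (h : ∫⁻ θ in Set.Ici κ, g θ ∂μ ≠ ⊤) {c : ℝ≥0∞} (hc : 0 < c) :
    ∃ m₀ : ℝ, κ ≤ m₀ ∧ ∀ m, m₀ ≤ m → ∫⁻ θ in Set.Ici m, g θ ∂μ ≤ c := by
  set ν : Measure ℝ := (μ.restrict (Set.Ici κ)).withDensity g with hν
  have hνs : ∀ m : ℝ, κ ≤ m → ν (Set.Ici m) = ∫⁻ θ in Set.Ici m, g θ ∂μ := by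
    intro m hm
    rw [hν, withDensity_apply _ measurableSet_Ici,
      Measure.restrict_restrict measurableSet_Ici, Set.Ici_inter_Ici, max_eq_left hm]
  have hfin : ν Set.univ ≠ ⊤ := by
    rw [hν, withDensity_apply _ MeasurableSet.univ, Measure.restrict_univ]; exact h
  have hempty : (⋂ n : ℕ, Set.Ici ((n : ℝ))) = ∅ := by
    ext x
    simp only [Set.mem_iInter, Set.mem_Ici, Set.mem_empty_iff_false, iff_false, not_forall,
      not_le]
    obtain ⟨n, hn⟩ := exists_nat_gt x
    exact ⟨n, hn⟩
  have htend : Tendsto (fun n : ℕ => ν (Set.Ici ((n : ℝ)))) atTop (𝓝 0) := by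
    have := tendsto_measure_iInter_atTop (μ := ν) (s := fun n : ℕ => Set.Ici ((n : ℝ)))
      (fun n => measurableSet_Ici.nullMeasurableSet)
      (fun i j hij => Set.Ici_subset_Ici.mpr (by exact_mod_cast hij))
      ⟨0, (lt_of_le_of_lt (measure_mono (Set.subset_univ _)) hfin.lt_top).ne⟩
    rwa [hempty, measure_empty] at this
  have := (htend.eventually_lt_const hc).exists
  obtain ⟨n, hn⟩ := this
  refine ⟨max κ n, le_max_left _ _, fun m hm => ?_⟩
  have hκm : κ ≤ m := le_trans (le_max_left _ _) hm
  rw [← hνs m hκm]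
  exact le_trans (measure_mono (Set.Ici_subset_Ici.mpr (le_trans (le_max_right _ _) hm))) hn.le

/-- Truncated drift-kernel estimate: for `m ≥ κ`,
`∫₀ᵀ ∫_{[m,∞)} e^{-θt}M(θ) dμ dt ≤ (∫_{[m,∞)} θ^{-1/2} dμ)^{1/2} (∫_{[m,∞)} θ^{-3/2} M² dμ)^{1/2}`,
uniformly in `T`, and this bound tends to `0` as `m → ∞`. -/
theorem stmt17 (μ : Measure ℝ) (κ : ℝ) (hκ : 0 < κ) (hsupp : μ (Set.Iio κ) = 0)
    (M : ℝ → ℝ) (hM : Measurable M) (hM0 : ∀ θ, 0 ≤ M θ)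
    (h1 : ∫⁻ θ in Set.Ici κ, ENNReal.ofReal (θ ^ (-(1/2) : ℝ)) ∂μ < ⊤)
    (h2 : ∫⁻ θ in Set.Ici κ, ENNReal.ofReal (θ ^ (-(3/2) : ℝ) * (M θ) ^ 2) ∂μ < ⊤) :
    (∀ m : ℝ, κ ≤ m → ∀ T : ℝ, 0 < T →
      ∫⁻ t in Set.Ioc (0 : ℝ) T,
          (∫⁻ θ in Set.Ici m, ENNReal.ofReal (Real.exp (-θ * t) * M θ) ∂μ) ≤
        (∫⁻ θ in Set.Ici m, ENNReal.ofReal (θ ^ (-(1/2) : ℝ)) ∂μ) ^ ((1 : ℝ)/2) *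
          (∫⁻ θ in Set.Ici m, ENNReal.ofReal (θ ^ (-(3/2) : ℝ) * (M θ) ^ 2) ∂μ) ^ ((1 : ℝ)/2))
    ∧ ∀ ε : ℝ, 0 < ε → ∃ m₀ : ℝ, ∀ m ≥ m₀, ∀ T : ℝ, 0 < T →
        ∫⁻ t in Set.Ioc (0 : ℝ) T,
            (∫⁻ θ in Set.Ici m, ENNReal.ofReal (Real.exp (-θ * t) * M θ) ∂μ) ≤
          ENNReal.ofReal ε := by
  -- σ-finiteness of μ
  have hIcc : ∀ x : ℝ, μ (Set.Icc κ x) < ⊤ := by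
    intro x
    rcases lt_or_ge x κ with hx | hx
    · rw [Set.Icc_eq_empty (not_le.mpr hx)]; simp
    · have hxpos : 0 < x := hκ.trans_le hx
      have key : ENNReal.ofReal (x ^ (-(1/2) : ℝ)) * μ (Set.Icc κ x)
          ≤ ∫⁻ θ in Set.Ici κ, ENNReal.ofReal (θ ^ (-(1/2) : ℝ)) ∂μ := by
        calc ENNReal.ofReal (x ^ (-(1/2) : ℝ)) * μ (Set.Icc κ x)
            = ∫⁻ _θ in Set.Icc κ x, ENNReal.ofReal (x ^ (-(1/2) : ℝ)) ∂μ := by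
              rw [setLIntegral_const, mul_comm]
          _ ≤ ∫⁻ θ in Set.Icc κ x, ENNReal.ofReal (θ ^ (-(1/2) : ℝ)) ∂μ := by
              refine setLIntegral_mono' measurableSet_Icc fun θ hθ => ?_
              exact ENNReal.ofReal_le_ofReal
                (Real.rpow_le_rpow_of_nonpos (hκ.trans_le hθ.1) hθ.2 (by norm_num))
          _ ≤ ∫⁻ θ in Set.Ici κ, ENNReal.ofReal (θ ^ (-(1/2) : ℝ)) ∂μ :=
              lintegral_mono' (Measure.restrict_mono Set.Icc_subset_Ici_self le_rfl) le_rfl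
      by_contra hcon
      rw [not_lt, top_le_iff] at hcon
      rw [hcon, ENNReal.mul_top (ENNReal.ofReal_pos.mpr (Real.rpow_pos_of_pos hxpos _)).ne',
        top_le_iff] at key
      exact h1.ne key
  haveI : SigmaFinite μ := by
    refine ⟨⟨{ set := fun n : ℕ => Set.Iio ((n : ℝ))
               set_mem := fun _ => trivial
               finite := fun n => ?_
               spanning := ?_ }⟩⟩
    · calc μ (Set.Iio ((n : ℝ))) ≤ μ (Set.Iio κ ∪ Set.Icc κ n) := by
            refine measure_mono fun y hy => ?_
            rcases lt_or_ge y κ with h | h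
            · exact Or.inl h
            · exact Or.inr ⟨h, le_of_lt hy⟩
        _ ≤ μ (Set.Iio κ) + μ (Set.Icc κ n) := measure_union_le _ _
        _ < ⊤ := by rw [hsupp, zero_add]; exact hIcc n
    · ext x
      simp only [Set.mem_iUnion, Set.mem_Iio, Set.mem_univ, iff_true]
      exact exists_nat_gt x
  -- Part 1
  have part1 : ∀ m : ℝ, κ ≤ m → ∀ T : ℝ, 0 < T →
      ∫⁻ t in Set.Ioc (0 : ℝ) T,
          (∫⁻ θ in Set.Ici m, ENNReal.ofReal (Real.exp (-θ * t) * M θ) ∂μ) ≤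
        (∫⁻ θ in Set.Ici m, ENNReal.ofReal (θ ^ (-(1/2) : ℝ)) ∂μ) ^ ((1 : ℝ)/2) *
          (∫⁻ θ in Set.Ici m, ENNReal.ofReal (θ ^ (-(3/2) : ℝ) * (M θ) ^ 2) ∂μ) ^ ((1 : ℝ)/2) := by
    intro m hm T hT
    have hmpos : 0 < m := hκ.trans_le hm
    have hmeasf : Measurable (Function.uncurry fun t θ =>
        ENNReal.ofReal (Real.exp (-θ * t) * M θ)) := by
      apply ENNReal.measurable_ofReal.comp
      exact ((Real.measurable_exp.comp ((measurable_snd.neg).mul measurable_fst)).mul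
        (hM.comp measurable_snd))
    rw [lintegral_lintegral_swap hmeasf.aemeasurable]
    have hconj : Real.HolderConjugate 2 2 := Real.HolderConjugate.two_two
    calc ∫⁻ θ in Set.Ici m, (∫⁻ t in Set.Ioc (0 : ℝ) T,
            ENNReal.ofReal (Real.exp (-θ * t) * M θ)) ∂μ
        ≤ ∫⁻ θ in Set.Ici m,
            ENNReal.ofReal (θ ^ (-(1/4) : ℝ)) * ENNReal.ofReal (θ ^ (-(3/4) : ℝ) * M θ) ∂μ := by
          refine setLIntegral_mono' measurableSet_Ici fun θ hθ => ?_
          have hθ0 : 0 < θ := hmpos.trans_le hθ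
          -- inner t-integral bound
          have step1 : ∫⁻ t in Set.Ioc (0 : ℝ) T, ENNReal.ofReal (Real.exp (-θ * t) * M θ)
              = (∫⁻ t in Set.Ioc (0 : ℝ) T, ENNReal.ofReal (Real.exp (-θ * t)))
                  * ENNReal.ofReal (M θ) := by
            rw [← lintegral_mul_const' _ _ ENNReal.ofReal_ne_top]
            congr 1 with t
            rw [← ENNReal.ofReal_mul (Real.exp_pos _).le]
          have hint : IntegrableOn (fun t => Real.exp (-θ * t)) (Set.Ioc (0 : ℝ) T) := by
            apply Continuous.integrableOn_Ioc
            exact Real.continuous_exp.comp (continuous_const.mul continuous_id)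
          have step2 : ∫⁻ t in Set.Ioc (0 : ℝ) T, ENNReal.ofReal (Real.exp (-θ * t))
              = ENNReal.ofReal (∫ t in Set.Ioc (0 : ℝ) T, Real.exp (-θ * t)) :=
            (ofReal_integral_eq_lintegral_ofReal hint
              (Filter.Eventually.of_forall fun t => (Real.exp_pos _).le)).symm
          have step3 : ∫ t in Set.Ioc (0 : ℝ) T, Real.exp (-θ * t) ≤ θ⁻¹ := by
            rw [← intervalIntegral.integral_of_le hT.le]
            have hderiv : ∀ t ∈ Set.uIcc (0 : ℝ) T, HasDerivAt
                (fun t => -θ⁻¹ * Real.exp (-θ * t)) (Real.exp (-θ * t)) t := by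
              intro t _
              have h1 : HasDerivAt (fun t : ℝ => -θ * t) (-θ) t := by
                simpa using (hasDerivAt_id t).const_mul (-θ)
              have h2 := (h1.exp).const_mul (-θ⁻¹)
              refine h2.congr_deriv ?_
              have hθne : θ ≠ 0 := hθ0.ne'
              rw [mul_comm (Real.exp _), ← mul_assoc, neg_mul_neg, inv_mul_cancel₀ hθne, one_mul]
            have hcont : IntervalIntegrable (fun t => Real.exp (-θ * t)) volume 0 T :=
              (Real.continuous_exp.comp (continuous_const.mul continuous_id)).intervalIntegrable _ _
            rw [intervalIntegral.integral_eq_sub_of_hasDerivAt hderiv hcont]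
            have h3 : 0 < Real.exp (-θ * T) := Real.exp_pos _
            have h4 : Real.exp (-θ * 0) = 1 := by simp
            rw [h4]
            have h5 : (0 : ℝ) ≤ θ⁻¹ * Real.exp (-θ * T) :=
              mul_nonneg (inv_nonneg.mpr hθ0.le) h3.le
            nlinarith
          calc ∫⁻ t in Set.Ioc (0 : ℝ) T, ENNReal.ofReal (Real.exp (-θ * t) * M θ)
              ≤ ENNReal.ofReal θ⁻¹ * ENNReal.ofReal (M θ) := by
                rw [step1, step2]
                exact mul_le_mul_left (ENNReal.ofReal_le_ofReal step3) _
            _ = ENNReal.ofReal (θ ^ (-(1/4) : ℝ)) * ENNReal.ofReal (θ ^ (-(3/4) : ℝ) * M θ) := by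
                rw [← ENNReal.ofReal_mul (Real.rpow_nonneg hθ0.le _),
                  ← ENNReal.ofReal_mul (inv_nonneg.mpr hθ0.le)]
                congr 1
                rw [← mul_assoc, ← Real.rpow_add hθ0,
                  show (-(1/4) + -(3/4) : ℝ) = -1 by norm_num, Real.rpow_neg_one]
      _ ≤ (∫⁻ θ in Set.Ici m, ENNReal.ofReal (θ ^ (-(1/4) : ℝ)) ^ (2 : ℝ) ∂μ) ^ ((1:ℝ)/2) *
            (∫⁻ θ in Set.Ici m, ENNReal.ofReal (θ ^ (-(3/4) : ℝ) * M θ) ^ (2 : ℝ) ∂μ) ^ ((1:ℝ)/2) :=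
          ENNReal.lintegral_mul_le_Lp_mul_Lq _ hconj
            (ENNReal.measurable_ofReal.comp (measurable_id.pow_const _)).aemeasurable
            (ENNReal.measurable_ofReal.comp ((measurable_id.pow_const _).mul hM)).aemeasurable
      _ = (∫⁻ θ in Set.Ici m, ENNReal.ofReal (θ ^ (-(1/2) : ℝ)) ∂μ) ^ ((1 : ℝ)/2) *
            (∫⁻ θ in Set.Ici m,
              ENNReal.ofReal (θ ^ (-(3/2) : ℝ) * (M θ) ^ 2) ∂μ) ^ ((1 : ℝ)/2) := by
          congr 1
          · congr 1
            refine setLIntegral_congr_fun measurableSet_Ici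
              (fun θ hθ => ?_)
            have hθ0 : 0 < θ := hmpos.trans_le hθ
            rw [ENNReal.ofReal_rpow_of_nonneg (Real.rpow_nonneg hθ0.le _) (by norm_num),
              ← Real.rpow_mul hθ0.le]
            norm_num
          · congr 1
            refine setLIntegral_congr_fun measurableSet_Ici
              (fun θ hθ => ?_)
            have hθ0 : 0 < θ := hmpos.trans_le hθ
            rw [ENNReal.ofReal_rpow_of_nonneg
              (mul_nonneg (Real.rpow_nonneg hθ0.le _) (hM0 θ)) (by norm_num : (0:ℝ) ≤ 2),
              Real.mul_rpow (Real.rpow_nonneg hθ0.le _) (hM0 θ),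
              ← Real.rpow_mul hθ0.le, Real.rpow_two]
            norm_num
  refine ⟨part1, ?_⟩
  -- Part 2
  intro ε hε
  have hc : (0 : ℝ≥0∞) < ENNReal.ofReal ε := ENNReal.ofReal_pos.mpr hε
  obtain ⟨m₁, hm₁κ, hA⟩ := stmt17_tail μ κ _ h1.ne hc
  obtain ⟨m₂, hm₂κ, hB⟩ := stmt17_tail μ κ _ h2.ne hc
  refine ⟨max m₁ m₂, fun m hm T hT => ?_⟩
  have hmκ : κ ≤ m := hm₁κ.trans (le_trans (le_max_left _ _) hm)
  calc ∫⁻ t in Set.Ioc (0 : ℝ) T,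
          (∫⁻ θ in Set.Ici m, ENNReal.ofReal (Real.exp (-θ * t) * M θ) ∂μ)
      ≤ (∫⁻ θ in Set.Ici m, ENNReal.ofReal (θ ^ (-(1/2) : ℝ)) ∂μ) ^ ((1 : ℝ)/2) *
          (∫⁻ θ in Set.Ici m, ENNReal.ofReal (θ ^ (-(3/2) : ℝ) * (M θ) ^ 2) ∂μ) ^ ((1 : ℝ)/2) :=
        part1 m hmκ T hT
    _ ≤ (ENNReal.ofReal ε) ^ ((1 : ℝ)/2) * (ENNReal.ofReal ε) ^ ((1 : ℝ)/2) := by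
        apply mul_le_mul'
        · exact ENNReal.rpow_le_rpow (hA m (le_trans (le_max_left _ _) hm)) (by norm_num)
        · exact ENNReal.rpow_le_rpow (hB m (le_trans (le_max_right _ _) hm)) (by norm_num)
    _ = ENNReal.ofReal ε := by
        rw [← ENNReal.rpow_add _ _ hc.ne' ENNReal.ofReal_ne_top]
        norm_num
end
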